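/- arXiv:1907.06140 — 6 statements merged into one kernel-verified Lean document; each statement's English description precedes it below -/
import Mathlib

section
/- Let x̄ be a locally extremal point of the system {Ω₁,…,Ωₛ} (s ≥ 2) of nonempty subsets of ℝⁿ, each locally closed around their common point x̄. Then there exist vectors vᵢ ∈ N(x̄;Ωᵢ) for i = 1,…,s, not all equal to zero, satisfying the generalized Euler equation v₁ + … + vₛ = 0. -/
open Filter Topology RealInnerProductSpace

noncomputable section

/-- Inner pairing on a product space (sum of the componentwise pairings). -/
instance prodInnerAux {E F : Type*} [Inner ℝ E] [Inner ℝ F] : Inner ℝ (E × F) :=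
  ⟨fun p q => inner ℝ p.1 q.1 + inner ℝ p.2 q.2⟩

variable {E Y : Type*}

/-- The prenormal (Fréchet/regular) cone `N̂(x; Ω)`:
`v ∈ N̂(x;Ω)` iff `limsup_{u →_Ω x} ⟨v, u - x⟩ / ‖u - x‖ ≤ 0`. -/
def preNC [NormedAddCommGroup E] [Inner ℝ E] (Ω : Set E) (x : E) : Set E :=
  {v | ∀ ε : ℝ, 0 < ε → ∃ δ : ℝ, 0 < δ ∧
      ∀ u ∈ Ω, ‖u - x‖ < δ → ⟪v, u - x⟫ ≤ ε * ‖u - x‖}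

/-- The basic/limiting (Mordukhovich) normal cone `N(x̄; Ω)`, obtained as the
sequential outer limit of prenormal cones at points of `Ω` converging to `x̄`. -/
def limNC [NormedAddCommGroup E] [Inner ℝ E] (Ω : Set E) (x : E) : Set E :=
  {v | ∃ xs vs : ℕ → E, (∀ k, xs k ∈ Ω) ∧ (∀ k, vs k ∈ preNC Ω (xs k)) ∧
      Tendsto xs atTop (𝓝 x) ∧ Tendsto vs atTop (𝓝 v)}

/-- Epigraph of an extended-real-valued function. -/
def epiF (φ : E → EReal) : Set (E × ℝ) := {p | φ p.1 ≤ (p.2 : EReal)}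

/-- The basic (limiting, Mordukhovich) subdifferential `∂φ(x)`. -/
def basicSubdiff [NormedAddCommGroup E] [Inner ℝ E] (φ : E → EReal) (x : E) : Set E :=
  {v | ((v, (-1 : ℝ)) : E × ℝ) ∈ limNC (epiF φ) (x, (φ x).toReal)}

/-- The singular subdifferential `∂^∞φ(x)`. -/
def singSubdiff [NormedAddCommGroup E] [Inner ℝ E] (φ : E → EReal) (x : E) : Set E :=
  {v | ((v, (0 : ℝ)) : E × ℝ) ∈ limNC (epiF φ) (x, (φ x).toReal)}

/-- Basic subdifferential of a real-valued function. -/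
def basicSubdiffR [NormedAddCommGroup E] [Inner ℝ E] (φ : E → ℝ) (x : E) : Set E :=
  basicSubdiff (fun u => ((φ u : ℝ) : EReal)) x

/-- The regular (Fréchet) subdifferential `∂̂φ(x)`:
`v ∈ ∂̂φ(x)` iff `liminf_{u → x} (φ(u) - φ(x) - ⟨v, u - x⟩)/‖u - x‖ ≥ 0`. -/
def regSubdiff [NormedAddCommGroup E] [Inner ℝ E] (φ : E → EReal) (x : E) : Set E :=
  {v | ∀ ε : ℝ, 0 < ε → ∃ δ : ℝ, 0 < δ ∧ ∀ u : E, ‖u - x‖ < δ →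
      ((((φ x).toReal + ⟪v, u - x⟫ - ε * ‖u - x‖ : ℝ)) : EReal) ≤ φ u}

/-- Regular subdifferential of a real-valued function. -/
def regSubdiffR [NormedAddCommGroup E] [Inner ℝ E] (φ : E → ℝ) (x : E) : Set E :=
  regSubdiff (fun u => ((φ u : ℝ) : EReal)) x

/-- Graph of a set-valued mapping. -/
def gphF (F : E → Set Y) : Set (E × Y) := {p | p.2 ∈ F p.1}

/-- The coderivative `D*F(x̄,ȳ)(w) = {v : (v, -w) ∈ N((x̄,ȳ); gph F)}`. -/
def coderiv [NormedAddCommGroup E] [Inner ℝ E] [NormedAddCommGroup Y] [Inner ℝ Y]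
    (F : E → Set Y) (x : E) (y : Y) (w : Y) : Set E :=
  {v | ((v, -w) : E × Y) ∈ limNC (gphF F) (x, y)}

/-- A set is locally closed around a point. -/
def LocallyClosedAt [TopologicalSpace E] (Ω : Set E) (x : E) : Prop :=
  ∃ U ∈ 𝓝 x, IsClosed (Ω ∩ U)

/-- A real-valued function is Lipschitz continuous around a point. -/
def LipschitzAround [NormedAddCommGroup E] (φ : E → ℝ) (x : E) : Prop :=
  ∃ (L : ℝ) (U : Set E), U ∈ 𝓝 x ∧ ∀ u ∈ U, ∀ w ∈ U, |φ u - φ w| ≤ L * ‖u - w‖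

/-- An extended-real-valued function is lower semicontinuous around a point. -/
def LscAround [TopologicalSpace E] (φ : E → EReal) (x : E) : Prop :=
  ∃ U ∈ 𝓝 x, LowerSemicontinuousOn φ U

/-- Inner semicontinuity of a set-valued mapping at a point of its graph. -/
def InnerSemicontAt [TopologicalSpace E] [TopologicalSpace Y]
    (M : E → Set Y) (x : E) (y : Y) : Prop :=
  ∀ xs : ℕ → E, Tendsto xs atTop (𝓝 x) → (∀ k, (M (xs k)).Nonempty) →
    ∃ ys : ℕ → Y, (∀ k, ys k ∈ M (xs k)) ∧ Tendsto ys atTop (𝓝 y)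

/-- The Lipschitz-like (Aubin) property of a set-valued mapping around a graph point. -/
def LipschitzLike [NormedAddCommGroup E] [NormedAddCommGroup Y]
    (F : E → Set Y) (x : E) (y : Y) : Prop :=
  ∃ (U : Set E) (V : Set Y) (ℓ : ℝ), U ∈ 𝓝 x ∧ V ∈ 𝓝 y ∧ 0 ≤ ℓ ∧
    ∀ a ∈ U, ∀ b ∈ U, ∀ z ∈ F a ∩ V, ∃ z' ∈ F b, ‖z - z'‖ ≤ ℓ * ‖a - b‖

/-- The optimal value (marginal) function `ϑ(x) = inf{φ(x,y) : y ∈ F(x)}`. -/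
def valueFn (φ : E × Y → ℝ) (F : E → Set Y) (x : E) : EReal :=
  sInf ((fun y => ((φ (x, y) : ℝ) : EReal)) '' F x)

/-- The argminimum mapping `M(x) = {y ∈ F(x) : φ(x,y) = ϑ(x)}`. -/
def argminMap (φ : E × Y → ℝ) (F : E → Set Y) (x : E) : Set Y :=
  {y | y ∈ F x ∧ ((φ (x, y) : ℝ) : EReal) = valueFn φ F x}


/-- Local extremality of a system of sets `{Ω i}` at a common point `x`:
there are a neighborhood `U` of `x` and sequences `a i k → 0` such that
`⋂ i (Ω i - a i k) ∩ U = ∅` for all `k`. -/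
def LocallyExtremalAt [NormedAddCommGroup E] {s : ℕ} (Ω : Fin s → Set E) (x : E) : Prop :=
  ∃ U ∈ 𝓝 x, ∃ a : Fin s → ℕ → E,
    (∀ i, Tendsto (a i) atTop (𝓝 0)) ∧
    ∀ k : ℕ, (⋂ i, (fun z => z + a i k) ⁻¹' Ω i) ∩ U = ∅

open scoped Classical in
/-- Extended-real-valued indicator function of a set (0 on the set, +∞ off it). -/
def indicatorE (Ω : Set E) (p : E) : EReal := if p ∈ Ω then 0 else ⊤

/-- Lower-level constraint mapping `F(x) = {y : fᵢ(x,y) ≤ 0, i = 1,…,r}`. -/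
def lowerF {r : ℕ} (f : Fin r → E × Y → ℝ) (x : E) : Set Y := {y | ∀ i, f i (x, y) ≤ 0}

/-- Feasibility in the single-level reformulation (P) of the optimistic bilevel program:
`gⱼ(x) ≤ 0`, `fᵢ(x,y) ≤ 0`, and `φ(x,y) ≤ ϑ(x)`. -/
def FeasibleP {r s : ℕ} (φ : E × Y → ℝ) (f : Fin r → E × Y → ℝ) (g : Fin s → E → ℝ)
    (x : E) (y : Y) : Prop :=
  (∀ j, g j x ≤ 0) ∧ (∀ i, f i (x, y) ≤ 0) ∧
    ((φ (x, y) : ℝ) : EReal) ≤ valueFn φ (lowerF f) x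

/-- `(x̄,ȳ)` is a local optimal solution to the single-level reformulation (P). -/
def LocalOptP [NormedAddCommGroup E] [NormedAddCommGroup Y] {r s : ℕ}
    (φ ψ : E × Y → ℝ) (f : Fin r → E × Y → ℝ) (g : Fin s → E → ℝ)
    (x : E) (y : Y) : Prop :=
  FeasibleP φ f g x y ∧
    ∃ U ∈ 𝓝 ((x, y) : E × Y), ∀ p ∈ U, FeasibleP φ f g p.1 p.2 → ψ (x, y) ≤ ψ p

/-- Partial calmness of (P) at a feasible point `(x̄,ȳ)` with constant `κ > 0`:
there is a neighborhood `U` of `(x̄,ȳ,0)` such that `ψ(x,y) - ψ(x̄,ȳ) + κ|ν| ≥ 0`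
for all `(x,y,ν) ∈ U` feasible to the perturbed problem. -/
def PartiallyCalm [NormedAddCommGroup E] [NormedAddCommGroup Y] {r s : ℕ}
    (φ ψ : E × Y → ℝ) (f : Fin r → E × Y → ℝ) (g : Fin s → E → ℝ)
    (x : E) (y : Y) (κ : ℝ) : Prop :=
  ∃ U ∈ 𝓝 ((x, y, (0 : ℝ)) : E × Y × ℝ), ∀ a ∈ U,
    (∀ j, g j a.1 ≤ 0) → (∀ i, f i (a.1, a.2.1) ≤ 0) →
    (((φ (a.1, a.2.1) + a.2.2 : ℝ) : EReal) = valueFn φ (lowerF f) a.1) →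
    ψ (x, y) ≤ ψ (a.1, a.2.1) + κ * |a.2.2|

/-- `(x̄,ȳ)` is a local optimal solution to the penalized problem:
minimize `ψ(x,y) + κ(φ(x,y) - ϑ(x))` subject to `gⱼ(x) ≤ 0`, `fᵢ(x,y) ≤ 0`. -/
def LocalOptPen [NormedAddCommGroup E] [NormedAddCommGroup Y] {r s : ℕ}
    (φ ψ : E × Y → ℝ) (f : Fin r → E × Y → ℝ) (g : Fin s → E → ℝ)
    (x : E) (y : Y) (κ : ℝ) : Prop :=
  ∃ U ∈ 𝓝 ((x, y) : E × Y), ∀ p ∈ U, (∀ j, g j p.1 ≤ 0) → (∀ i, f i p ≤ 0) →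
    ((ψ (x, y) : ℝ) : EReal) + (κ : EReal) * (((φ (x, y) : ℝ) : EReal) - valueFn φ (lowerF f) x)
      ≤ ((ψ p : ℝ) : EReal) + (κ : EReal) * (((φ p : ℝ) : EReal) - valueFn φ (lowerF f) p.1)

/-- Lower-level regularity (generalized MFCQ for the lower-level constraints) at `(x̄,ȳ)`. -/
def LowerLevelRegular [NormedAddCommGroup E] [Inner ℝ E]
    [NormedAddCommGroup Y] [NormedSpace ℝ Y] [Inner ℝ Y]
    {r : ℕ} (f : Fin r → E × Y → ℝ) (x : E) (y : Y) : Prop :=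
  ∀ (w : Fin r → E × Y) (l : Fin r → ℝ),
    (∀ i, f i (x, y) = 0 → w i ∈ basicSubdiffR (f i) (x, y)) →
    (∀ i, 0 ≤ l i) → (∀ i, f i (x, y) ≠ 0 → l i = 0) →
    ∑ i, l i • (w i).2 = 0 → ∀ i, l i = 0

/-- Upper-level regularity (generalized MFCQ for the upper-level constraints) at `x̄`. -/
def UpperLevelRegular [NormedAddCommGroup E] [NormedSpace ℝ E] [Inner ℝ E]
    {s : ℕ} (g : Fin s → E → ℝ) (x : E) : Prop :=
  ∀ (w : Fin s → E) (l : Fin s → ℝ),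
    (∀ j, g j x = 0 → w j ∈ basicSubdiffR (g j) x) →
    (∀ j, 0 ≤ l j) → (∀ j, g j x ≠ 0 → l j = 0) →
    ∑ j, l j • w j = 0 → ∀ j, l j = 0


/-!
Mordukhovich's method of metric approximations. For a perturbation `a` such that no point `x`
of a ball around `x̄` has `x + aᵢ ∈ Ωᵢ` for all `i`, minimize
`φ(x) = √(∑ dist(x + aᵢ, Ωᵢ)²) + ‖x - x̄‖²` over that ball. The minimizer `x` lies in the
interior, and the square root does not vanish there; replacing each distance by the distance to
a nearest point `wᵢ ∈ Ωᵢ` gives a function that is smooth at `x` and still minimal there. Its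
vanishing gradient says that the normalized residuals `vᵢ = (x + aᵢ - wᵢ) / ν`, which are
prenormals to `Ωᵢ` at `wᵢ` with `∑ ‖vᵢ‖² = 1`, satisfy `∑ vᵢ = -2 (x - x̄)`. Because of the
square root this error is of order `√‖a‖`; letting `a → 0` and extracting a convergent
subsequence of the `vᵢ` (finite dimension) gives limiting normals, not all zero,
with zero sum.
-/

open Metric Set

theorem isClosed_inter_closedBall_of_subset {X : Type*} [PseudoMetricSpace X] {Ω V : Set X}
    (hΩ : IsClosed (Ω ∩ V)) {x₀ : X} {ρ : ℝ} (hρ : closedBall x₀ ρ ⊆ V) :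
    IsClosed (Ω ∩ closedBall x₀ ρ) := by
  rw [← inter_eq_right.2 hρ, ← inter_assoc]
  exact hΩ.inter isClosed_closedBall

section NormalCones

variable {F : Type*} [NormedAddCommGroup F] [InnerProductSpace ℝ F]

theorem smul_sub_mem_preNC_of_isNearest {C : Set F} {p w : F}
    (hw : ∀ u ∈ C, dist p w ≤ dist p u) {c : ℝ} (hc : 0 ≤ c) : c • (p - w) ∈ preNC C w := by
  intro ε hε
  refine ⟨2 * ε / (c + 1), by positivity, fun u hu hδ => ?_⟩
  have hquad : ⟪p - w, u - w⟫ ≤ ‖u - w‖ ^ 2 / 2 := by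
    have hpu : ‖p - u‖ ^ 2 = ‖p - w‖ ^ 2 - 2 * ⟪p - w, u - w⟫ + ‖u - w‖ ^ 2 := by
      rw [← norm_sub_sq_real, sub_sub_sub_cancel_right]
    have := hw u hu
    rw [dist_eq_norm, dist_eq_norm] at this
    nlinarith [norm_nonneg (p - w)]
  have hsmall : c * ‖u - w‖ ≤ 2 * ε := by
    rw [lt_div_iff₀ (by positivity)] at hδ
    nlinarith [norm_nonneg (u - w)]
  calc ⟪c • (p - w), u - w⟫ = c * ⟪p - w, u - w⟫ := real_inner_smul_left _ _ _
    _ ≤ c * (‖u - w‖ ^ 2 / 2) := mul_le_mul_of_nonneg_left hquad hc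
    _ ≤ ε * ‖u - w‖ := by nlinarith [norm_nonneg (u - w)]

theorem preNC_inter_subset {Ω V : Set F} {w : F} (hV : V ∈ 𝓝 w) :
    preNC (Ω ∩ V) w ⊆ preNC Ω w := by
  intro v hv ε hε
  obtain ⟨δ, hδ, hv⟩ := hv ε hε
  obtain ⟨ρ, hρ, hρV⟩ := Metric.mem_nhds_iff.1 hV
  refine ⟨min δ ρ, lt_min hδ hρ, fun u hu hu' =>
    hv u ⟨hu, hρV ?_⟩ (hu'.trans_le (min_le_left _ _))⟩
  rw [mem_ball, dist_eq_norm]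
  exact hu'.trans_le (min_le_right _ _)

end NormalCones

section Stationarity

variable {ι F : Type*} [Fintype ι] [NormedAddCommGroup F] [InnerProductSpace ℝ F]

theorem hasFDerivAt_sqrt_sum_norm_sub_sq_add_norm_sub_sq (b : ι → F) (c : F) {x : F}
    (hx : ∑ i, ‖x - b i‖ ^ 2 ≠ 0) :
    HasFDerivAt (fun y => √(∑ i, ‖y - b i‖ ^ 2) + ‖y - c‖ ^ 2)
      (innerSL ℝ ((√(∑ i, ‖x - b i‖ ^ 2))⁻¹ • ∑ i, (x - b i) + (2 : ℝ) • (x - c))) x := by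
  have hsum : HasFDerivAt (fun y => ∑ i, ‖y - b i‖ ^ 2)
      (∑ i, 2 • (innerSL ℝ (x - b i)).comp (ContinuousLinearMap.id ℝ F)) x :=
    HasFDerivAt.fun_sum fun i _ => ((hasFDerivAt_id x).sub_const (b i)).norm_sq
  refine ((hsum.sqrt hx).add ((hasFDerivAt_id x).sub_const c).norm_sq).congr_fderiv ?_
  ext h
  simp only [add_apply, smul_apply, sum_apply, ContinuousLinearMap.comp_id, coe_innerSL_apply,
    id_eq, inner_add_left, real_inner_smul_left, sum_inner, nsmul_eq_mul, Nat.cast_ofNat, smul_eq_mul,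
    ← Finset.mul_sum]
  ring

theorem IsLocalMin.eq_zero_of_hasFDerivAt_innerSL {f : F → ℝ} {x g : F} (hmin : IsLocalMin f x)
    (hf : HasFDerivAt f (innerSL ℝ g) x) : g = 0 := by
  simpa using congr($(hmin.hasFDerivAt_eq_zero hf) g)

end Stationarity

section Penalty

variable {ι F : Type*} [Fintype ι] [NormedAddCommGroup F]

def extremalPenalty (C : ι → Set F) (a : ι → F) (x₀ x : F) : ℝ :=
  √(∑ i, infDist (x + a i) (C i) ^ 2) + ‖x - x₀‖ ^ 2

theorem continuous_extremalPenalty (C : ι → Set F) (a : ι → F) (x₀ : F) :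
    Continuous (extremalPenalty C a x₀) := by
  unfold extremalPenalty
  fun_prop

theorem extremalPenalty_self_le {C : ι → Set F} {x₀ : F} (hx₀ : ∀ i, x₀ ∈ C i) (a : ι → F) :
    extremalPenalty C a x₀ x₀ ≤ √(∑ i, ‖a i‖ ^ 2) := by
  have hdist : ∀ i, infDist (x₀ + a i) (C i) ≤ ‖a i‖ := fun i => by
    simpa [dist_eq_norm] using infDist_le_dist_of_mem (x := x₀ + a i) (hx₀ i)
  rw [extremalPenalty, sub_self, norm_zero, zero_pow two_ne_zero, add_zero]
  gcongr with i
  exacts [infDist_nonneg, hdist i]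

theorem extremalPenalty_le {C : ι → Set F} {w : ι → F} (hw : ∀ i, w i ∈ C i) (a : ι → F)
    (x₀ x : F) :
    extremalPenalty C a x₀ x ≤ √(∑ i, ‖x - (w i - a i)‖ ^ 2) + ‖x - x₀‖ ^ 2 := by
  unfold extremalPenalty
  gcongr with i
  · exact infDist_nonneg
  · simpa [dist_eq_norm, sub_sub_eq_add_sub] using infDist_le_dist_of_mem (x := x + a i) (hw i)

end Penalty

section Perturbation

variable {ι F : Type*} [Fintype ι] [NormedAddCommGroup F] [InnerProductSpace ℝ F]
  [ProperSpace F]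

theorem exists_preNC_sum_small_of_perturbation {C : ι → Set F} {x₀ : F} {a : ι → F} {γ r : ℝ}
    (hC : ∀ i, IsClosed (C i)) (hx₀ : ∀ i, x₀ ∈ C i)
    (hγ : √(∑ i, ‖a i‖ ^ 2) ≤ γ) (hr : √γ < r)
    (hsep : ∀ x ∈ closedBall x₀ r, ∃ i, x + a i ∉ C i) :
    ∃ w v : ι → F, (∀ i, w i ∈ C i) ∧ (∀ i, v i ∈ preNC (C i) (w i)) ∧
      ∑ i, ‖v i‖ ^ 2 = 1 ∧ ‖∑ i, v i‖ ≤ 2 * √γ ∧ ∀ i, ‖w i - x₀‖ ≤ 2 * (√γ + γ) := by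
  have hr₀ : 0 ≤ r := (Real.sqrt_nonneg γ).trans hr.le
  obtain ⟨x, hx, hmin⟩ := (isCompact_closedBall x₀ r).exists_isMinOn
    (nonempty_closedBall.2 hr₀) (continuous_extremalPenalty C a x₀).continuousOn
  have hxx₀ : ‖x - x₀‖ ≤ √γ := by
    have := (hmin (mem_closedBall_self hr₀)).trans ((extremalPenalty_self_le hx₀ a).trans hγ)
    rw [extremalPenalty] at this
    exact Real.le_sqrt_of_sq_le
      (by linarith [Real.sqrt_nonneg (∑ i, infDist (x + a i) (C i) ^ 2)])
  choose w hwC hw using fun i => (hC i).exists_infDist_eq_dist ⟨x₀, hx₀ i⟩ (x + a i)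
  set b := fun i => w i - a i
  set ν := √(∑ i, ‖x - b i‖ ^ 2)
  have hres : ∀ i, x - b i = x + a i - w i := fun i => sub_sub_eq_add_sub ..
  have hν : 0 < ν := by
    refine Real.sqrt_pos.2 ((Finset.sum_nonneg fun i _ => sq_nonneg _).lt_of_ne' fun h0 => ?_)
    obtain ⟨i, hi⟩ := hsep x hx
    have := (Finset.sum_eq_zero_iff_of_nonneg fun i _ => sq_nonneg _).1 h0 i (Finset.mem_univ i)
    rw [sq_eq_zero_iff, norm_eq_zero, hres, sub_eq_zero] at this
    exact hi (this ▸ hwC i)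
  have hstat : ν⁻¹ • ∑ i, (x - b i) + (2 : ℝ) • (x - x₀) = 0 := by
    refine IsLocalMin.eq_zero_of_hasFDerivAt_innerSL ?_
      (hasFDerivAt_sqrt_sum_norm_sub_sq_add_norm_sub_sq b x₀ (Real.sqrt_pos.1 hν).ne')
    have hball : closedBall x₀ r ∈ 𝓝 x :=
      closedBall_mem_nhds_of_mem (mem_ball_iff_norm.2 (hxx₀.trans_lt hr))
    have hφx : extremalPenalty C a x₀ x = ν + ‖x - x₀‖ ^ 2 := by
      simp only [extremalPenalty, hw, dist_eq_norm, hres, ν]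
    filter_upwards [hball] with y hy
    exact hφx ▸ (hmin hy).trans (extremalPenalty_le hwC a x₀ y)
  refine ⟨w, fun i => ν⁻¹ • (x - b i), hwC, fun i => ?_, ?_, ?_, fun i => ?_⟩
  · show ν⁻¹ • (x - b i) ∈ _
    rw [hres]
    exact smul_sub_mem_preNC_of_isNearest (fun u hu => hw i ▸ infDist_le_dist_of_mem hu)
      (inv_nonneg.2 hν.le)
  · simp only [norm_smul, mul_pow, ← Finset.mul_sum, norm_inv, Real.norm_of_nonneg hν.le]
    have hν2 : ν ^ 2 = ∑ i, ‖x - b i‖ ^ 2 :=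
      Real.sq_sqrt (Finset.sum_nonneg fun i _ => sq_nonneg _)
    rw [← hν2, inv_pow, inv_mul_cancel₀ (pow_ne_zero 2 hν.ne')]
  · rw [← Finset.smul_sum, eq_neg_of_add_eq_zero_left hstat, norm_neg, norm_smul,
      Real.norm_two]
    gcongr
  · have hai : ‖a i‖ ≤ γ := le_trans (Real.le_sqrt_of_sq_le
      (Finset.single_le_sum (fun j _ => sq_nonneg ‖a j‖) (Finset.mem_univ i))) hγ
    have hxai : ‖x + a i - x₀‖ ≤ √γ + γ := by
      rw [add_sub_right_comm]
      exact (norm_add_le _ _).trans (add_le_add hxx₀ hai)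
    have hwi : ‖x + a i - w i‖ ≤ ‖x + a i - x₀‖ := by
      simpa [← dist_eq_norm, ← hw i] using infDist_le_dist_of_mem (x := x + a i) (hx₀ i)
    calc ‖w i - x₀‖ = ‖(x + a i - x₀) - (x + a i - w i)‖ := by congr 1; abel
      _ ≤ ‖x + a i - x₀‖ + ‖x + a i - w i‖ := norm_sub_le _ _
      _ ≤ 2 * (√γ + γ) := by linarith

end Perturbation

section ExtremalPrinciple

variable {ι F : Type*} [NormedAddCommGroup F] [InnerProductSpace ℝ F]

def ApproxExtremalPrinciple [Fintype ι] (Ω : ι → Set F) (x₀ : F) : Prop :=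
  ∀ ε > 0, ∃ w v : ι → F, (∀ i, w i ∈ Ω i) ∧ (∀ i, ‖w i - x₀‖ ≤ ε) ∧
    (∀ i, v i ∈ preNC (Ω i) (w i)) ∧ ∑ i, ‖v i‖ ^ 2 = 1 ∧ ‖∑ i, v i‖ ≤ ε

variable [ProperSpace F]

theorem LocallyExtremalAt.approxExtremalPrinciple {s : ℕ} {Ω : Fin s → Set F} {x₀ : F}
    (hx₀ : ∀ i, x₀ ∈ Ω i) (hcl : ∀ i, LocallyClosedAt (Ω i) x₀)
    (hext : LocallyExtremalAt Ω x₀) : ApproxExtremalPrinciple Ω x₀ := by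
  obtain ⟨U, hU, a, ha, hempty⟩ := hext
  choose V hV hΩV using hcl
  obtain ⟨ρ, hρ, hρUV⟩ :=
    nhds_basis_closedBall.mem_iff.1 (Filter.inter_mem hU (Filter.iInter_mem.2 hV))
  have hC : ∀ i, IsClosed (Ω i ∩ closedBall x₀ ρ) := fun i =>
    isClosed_inter_closedBall_of_subset (hΩV i) fun y hy => mem_iInter.1 (hρUV hy).2 i
  intro ε hε
  obtain ⟨δ, hδ, hδε, hδρ⟩ : ∃ δ > 0, δ ≤ ε / 4 ∧ δ ≤ ρ / 4 :=
    ⟨min ε ρ / 4, by positivity, by gcongr; exact min_le_left _ _,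
      by gcongr; exact min_le_right _ _⟩
  set γ := fun k => √(∑ i, ‖a i k‖ ^ 2)
  have hγ : Tendsto (fun k => √(γ k) + γ k) atTop (𝓝 0) := by
    have : Tendsto γ atTop (𝓝 0) := by
      simpa using (tendsto_finsetSum _ fun i _ => ((ha i).norm.pow 2)).sqrt
    simpa using this.sqrt.add this
  obtain ⟨k, hk⟩ := (hγ.eventually (ge_mem_nhds hδ)).exists
  have hsγ : √(γ k) ≤ δ := by linarith [Real.sqrt_nonneg (∑ i, ‖a i k‖ ^ 2)]
  obtain ⟨w, v, hwC, hv, hv1, hvsum, hw⟩ := exists_preNC_sum_small_of_perturbation (r := ρ) hC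
    (fun i => ⟨hx₀ i, mem_closedBall_self hρ.le⟩) le_rfl (by linarith) fun x hx => by
      by_contra! hmem
      have : x ∈ (⋂ i, (fun z => z + a i k) ⁻¹' Ω i) ∩ U :=
        ⟨mem_iInter.2 fun i => (hmem i).1, (hρUV hx).1⟩
      simp [hempty k] at this
  refine ⟨w, v, fun i => (hwC i).1, fun i => by linarith [hw i], fun i => ?_, hv1, by linarith⟩
  exact preNC_inter_subset
    (closedBall_mem_nhds_of_mem (mem_ball_iff_norm.2 (by linarith [hw i]))) (hv i)

theorem ApproxExtremalPrinciple.exists_limNC [Fintype ι] {Ω : ι → Set F} {x₀ : F}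
    (h : ApproxExtremalPrinciple Ω x₀) :
    ∃ v : ι → F, (∀ i, v i ∈ limNC (Ω i) x₀) ∧ (∃ i, v i ≠ 0) ∧ ∑ i, v i = 0 := by
  choose w v hwΩ hw hv hv1 hvsum using fun k : ℕ => h (1 / (k + 1)) Nat.one_div_pos_of_nat
  have hbdd : ∀ k, v k ∈ closedBall (0 : ι → F) 1 := fun k => by
    rw [mem_closedBall_zero_iff, pi_norm_le_iff_of_nonneg zero_le_one]
    intro i
    have := (hv1 k).symm ▸
      Finset.single_le_sum (fun j _ => sq_nonneg ‖v k j‖) (Finset.mem_univ i)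
    nlinarith [norm_nonneg (v k i)]
  obtain ⟨L, -, σ, hσ, hL⟩ := tendsto_subseq_of_bounded isBounded_closedBall hbdd
  have hε : Tendsto (fun k => 1 / ((σ k : ℝ) + 1)) atTop (𝓝 0) :=
    tendsto_one_div_add_atTop_nhds_zero_nat.comp hσ.tendsto_atTop
  have hLi : ∀ i, Tendsto (fun k => v (σ k) i) atTop (𝓝 (L i)) :=
    fun i => tendsto_pi_nhds.1 hL i
  refine ⟨L, fun i => ⟨fun k => w (σ k) i, fun k => v (σ k) i, fun k => hwΩ _ i,
    fun k => hv _ i, ?_, hLi i⟩, ?_, ?_⟩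
  · exact tendsto_iff_norm_sub_tendsto_zero.2 (squeeze_zero (fun _ => norm_nonneg _)
      (fun k => hw (σ k) i) hε)
  · have hL1 : ∑ i, ‖L i‖ ^ 2 = 1 :=
      tendsto_nhds_unique (tendsto_finsetSum _ fun i _ => (hLi i).norm.pow 2)
        (by simp only [hv1]; exact tendsto_const_nhds)
    by_contra! hL0
    simp [hL0] at hL1
  · exact tendsto_nhds_unique (tendsto_finsetSum _ fun i _ => hLi i)
      (squeeze_zero_norm (fun k => hvsum (σ k)) hε)

end ExtremalPrinciple

theorem extremal_principle_general {n s : ℕ}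
    (Ω : Fin s → Set (EuclideanSpace ℝ (Fin n))) (xbar : EuclideanSpace ℝ (Fin n))
    (hx : ∀ i, xbar ∈ Ω i)
    (hcl : ∀ i, LocallyClosedAt (Ω i) xbar)
    (hext : LocallyExtremalAt Ω xbar) :
    ∃ v : Fin s → EuclideanSpace ℝ (Fin n),
      (∀ i, v i ∈ limNC (Ω i) xbar) ∧ (∃ i, v i ≠ 0) ∧ ∑ i, v i = 0 :=
  (hext.approxExtremalPrinciple hx hcl).exists_limNC

/-- Extremal principle: if `x̄` is a locally extremal point of the system
`{Ω₁,…,Ωₛ}` (s ≥ 2) of nonempty subsets of ℝⁿ, each locally closed around the common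
point `x̄`, then there are `vᵢ ∈ N(x̄;Ωᵢ)`, not all zero, with `v₁ + … + vₛ = 0`. -/
theorem extremal_principle {n s : ℕ} (hs : 2 ≤ s)
    (Ω : Fin s → Set (EuclideanSpace ℝ (Fin n))) (xbar : EuclideanSpace ℝ (Fin n))
    (hne : ∀ i, (Ω i).Nonempty) (hx : ∀ i, xbar ∈ Ω i)
    (hcl : ∀ i, LocallyClosedAt (Ω i) xbar)
    (hext : LocallyExtremalAt Ω xbar) :
    ∃ v : Fin s → EuclideanSpace ℝ (Fin n),
      (∀ i, v i ∈ limNC (Ω i) xbar) ∧ (∃ i, v i ≠ 0) ∧ ∑ i, v i = 0 :=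
  extremal_principle_general Ω xbar hx hcl hext
end
end

section
/- Let x̄ be a feasible solution to the mathematical program: minimize φ₀(x) subject to φᵢ(x) ≤ 0 for i = 1,…,m, that is a local minimizer, where all functions φᵢ : ℝⁿ → ℝ, i = 0,…,m, are locally Lipschitzian around x̄. Then there exist multipliers λ₀,…,λₘ satisfying the sign conditions λᵢ ≥ 0 for all i = 0,…,m, the nontriviality condition λ₀ + … + λₘ ≠ 0, the complementary slackness conditions λᵢφᵢ(x̄) = 0 for i = 1,…,m, and the subdifferential Lagrangian inclusion 0 ∈ Σ_{i=0}^{m} λᵢ∂φᵢ(x̄). -/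
open Filter Topology RealInnerProductSpace

noncomputable section

variable {E Y : Type*}

open Metric
open scoped NNReal

/-!
Decouple the constraints: give each `φ i` its own copy `u i` of the variable and
minimize `φ₀ u₀ + ‖u₀ - x̄‖² + c ∑ i, (max (φ i (u i)) 0 ^ 2 + ‖u i - u₀‖²)` over a compact
neighbourhood of the diagonal point `(x̄, …, x̄)`. As `c → ∞` the minimizers converge to that point
(penalty method, using the local optimality of `x̄`). At a minimizer every block is minimized
separately, so no subdifferential sum rule is needed: in the `u₀`-block `φ₀` is perturbed by a
quadratic, which yields a Fréchet subgradient of `φ₀`; an active `u i`-block yields the Fréchet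
subgradient `(φ i (u i))⁻¹ • (u₀ - u i)` of `φ i`; an inactive one forces `u i = u₀`. These
subgradients are bounded by the Lipschitz constant, so after normalizing the multipliers to the
unit simplex a subsequence converges, and limits of Fréchet subgradients are basic subgradients.
Constraints with zero multiplier are given any basic subgradient, which exists for Lipschitz
functions.
-/

section LipschitzAround

variable [NormedAddCommGroup E]

theorem LipschitzAround.exists_lipschitzOnWith_ball {φ : E → ℝ} {x : E}
    (h : LipschitzAround φ x) : ∃ K : ℝ≥0, ∃ R > 0, LipschitzOnWith K φ (ball x R) := by
  obtain ⟨L, U, hU, hL⟩ := h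
  obtain ⟨R, hR, hRU⟩ := Metric.mem_nhds_iff.1 hU
  exact ⟨L.toNNReal, R, hR, LipschitzOnWith.of_dist_le' fun u hu w hw => by
    simpa [Real.dist_eq, dist_eq_norm] using hL u (hRU hu) w (hRU hw)⟩

theorem LipschitzAround.continuousAt {φ : E → ℝ} {x : E} (h : LipschitzAround φ x) :
    ContinuousAt φ x := by
  obtain ⟨K, R, hR, hK⟩ := h.exists_lipschitzOnWith_ball
  exact hK.continuousOn.continuousAt (ball_mem_nhds x hR)

theorem exists_lipschitzOnWith_ball_of_forall_lipschitzAround {ι : Type*} [Fintype ι]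
    {φ : ι → E → ℝ} {x : E} (h : ∀ i, LipschitzAround (φ i) x) :
    ∃ K : ℝ≥0, ∃ R > 0, ∀ i, LipschitzOnWith K (φ i) (ball x R) := by
  choose K R hR hK using fun i => (h i).exists_lipschitzOnWith_ball
  have hev : ∀ᶠ r in 𝓝[>] (0 : ℝ), ∀ i, LipschitzOnWith (∑ j, K j) (φ i) (ball x r) :=
    eventually_all.2 fun i =>
      (eventually_nhdsWithin_of_eventually_nhds (eventually_lt_nhds (hR i))).mono fun r hr =>
      ((hK i).weaken (Finset.single_le_sum (f := K) (fun _ _ => bot_le) (Finset.mem_univ i))).mono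
        (ball_subset_ball hr.le)
  obtain ⟨r, hr, hr₀⟩ := (hev.and self_mem_nhdsWithin).exists
  exact ⟨_, r, hr₀, hr⟩

end LipschitzAround

theorem IsCompact.exists_tendsto_penalty_minimizers {X : Type*} [TopologicalSpace X]
    [FirstCountableTopology X] {K : Set X} (hK : IsCompact K) {f h : X → ℝ}
    (hf : ContinuousOn f K) (hh : ContinuousOn h K) (hh₀ : ∀ p ∈ K, 0 ≤ h p) {q : X}
    (hq : q ∈ K) (hq₀ : h q = 0) :
    ∃ p ∈ K, h p = 0 ∧ f p ≤ f q ∧ ∃ (c : ℕ → ℝ) (z : ℕ → X), (∀ k, 0 < c k) ∧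
      Tendsto z atTop (𝓝 p) ∧ ∀ k, IsMinOn (fun y => f y + c k * h y) K (z k) := by
  obtain ⟨y₀, -, hy₀⟩ := hK.exists_isMinOn ⟨q, hq⟩ hf
  choose z hzK hz using fun k : ℕ =>
    hK.exists_isMinOn ⟨q, hq⟩ (hf.add (continuousOn_const (c := (k : ℝ) + 1).mul hh))
  have hzq : ∀ k : ℕ, f (z k) + ((k : ℝ) + 1) * h (z k) ≤ f q := fun k => by
    simpa [hq₀] using hz k hq
  have hh_le : ∀ k : ℕ, h (z k) ≤ (f q - f y₀) * (1 / ((k : ℝ) + 1)) := fun k => by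
    rw [mul_one_div, le_div_iff₀ (by positivity)]
    linarith [hzq k, isMinOn_iff.1 hy₀ _ (hzK k)]
  obtain ⟨p, hpK, g, hg, hzp⟩ := hK.tendsto_subseq hzK
  have hzpK : Tendsto (z ∘ g) atTop (𝓝[K] p) :=
    tendsto_nhdsWithin_iff.2 ⟨hzp, Eventually.of_forall fun k => hzK _⟩
  have hbound : Tendsto (fun k => (f q - f y₀) * (1 / ((g k : ℝ) + 1))) atTop (𝓝 0) := by
    simpa only [mul_zero, Function.comp_def] using
      ((tendsto_one_div_add_atTop_nhds_zero_nat (𝕜 := ℝ)).comp hg.tendsto_atTop).const_mul _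
  refine ⟨p, hpK, le_antisymm ?_ ?_, ?_, fun k => (g k : ℝ) + 1, z ∘ g, fun k => by positivity,
    hzp, fun k => hz (g k)⟩
  · exact le_of_tendsto_of_tendsto' ((hh p hpK).tendsto.comp hzpK) hbound fun k => hh_le (g k)
  · exact ge_of_tendsto' ((hh p hpK).tendsto.comp hzpK) fun k => hh₀ _ (hzK _)
  · refine le_of_tendsto' ((hf p hpK).tendsto.comp hzpK) fun k => ?_
    have := mul_nonneg (by positivity : (0 : ℝ) ≤ (g k : ℝ) + 1) (hh₀ _ (hzK (g k)))
    show f (z (g k)) ≤ f q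
    linarith [hzq (g k)]

section FrechetSubgradients

variable [NormedAddCommGroup E] [InnerProductSpace ℝ E]

theorem norm_sub_sq_eq_add_inner (u z a : E) :
    ‖u - a‖ ^ 2 = ‖z - a‖ ^ 2 + 2 * ⟪z - a, u - z⟫ + ‖u - z‖ ^ 2 := by
  rw [show u - a = (z - a) + (u - z) by abel, norm_add_sq_real]

theorem mem_regSubdiffR_iff {φ : E → ℝ} {x v : E} :
    v ∈ regSubdiffR φ x ↔ ∀ ε > 0, ∀ᶠ u in 𝓝 x, φ x + ⟪v, u - x⟫ - ε * ‖u - x‖ ≤ φ u := by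
  simp only [regSubdiffR, regSubdiff, Set.mem_ofPred_eq, EReal.toReal_coe, EReal.coe_le_coe_iff,
    Metric.eventually_nhds_iff, dist_eq_norm]

theorem mem_regSubdiffR_of_eventually_le {φ : E → ℝ} {x v : E} (C : ℝ)
    (h : ∀ᶠ u in 𝓝 x, ⟪v, u - x⟫ - C * ‖u - x‖ ^ 2 ≤ φ u - φ x) : v ∈ regSubdiffR φ x := by
  refine mem_regSubdiffR_iff.2 fun ε hε => ?_
  filter_upwards [h, ball_mem_nhds x (by positivity : 0 < ε / (|C| + 1))] with u hu hu'
  rw [mem_ball, dist_eq_norm] at hu'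
  have hsmall : (|C| + 1) * ‖u - x‖ ≤ ε := ((lt_div_iff₀' (by positivity)).1 hu').le
  nlinarith [mul_le_mul_of_nonneg_right (le_abs_self C) (sq_nonneg ‖u - x‖),
    mul_le_mul_of_nonneg_right hsmall (norm_nonneg (u - x))]

theorem neg_mem_regSubdiffR_of_isLocalMin_add {φ g : E → ℝ} {z w : E} (C : ℝ)
    (hmin : IsLocalMin (fun u => φ u + g u) z)
    (hg : ∀ u, g u ≤ g z + ⟪w, u - z⟫ + C * ‖u - z‖ ^ 2) : -w ∈ regSubdiffR φ z := by
  refine mem_regSubdiffR_of_eventually_le C (Eventually.mono hmin fun u hu => ?_)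
  rw [inner_neg_left]
  linarith [hg u, show φ z + g z ≤ φ u + g u from hu]

theorem mem_preNC_epiF_of_mem_regSubdiffR {φ : E → ℝ} {x v : E} (hv : v ∈ regSubdiffR φ x) :
    ((v, (-1 : ℝ)) : E × ℝ) ∈ preNC (epiF fun u => (φ u : EReal)) (x, φ x) := by
  intro ε hε
  obtain ⟨δ, hδ, hd⟩ := Metric.eventually_nhds_iff.1 (mem_regSubdiffR_iff.1 hv ε hε)
  refine ⟨δ, hδ, fun ⟨u, μ⟩ hμ hu => ?_⟩
  have hφμ : φ u ≤ μ := EReal.coe_le_coe_iff.1 hμ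
  have hfst : ‖u - x‖ ≤ ‖((u, μ) : E × ℝ) - (x, φ x)‖ := norm_fst_le (((u, μ) : E × ℝ) - (x, φ x))
  have hu' := hd (show dist u x < δ by rw [dist_eq_norm]; exact hfst.trans_lt hu)
  show ⟪v, u - x⟫ + ⟪(-1 : ℝ), μ - φ x⟫ ≤ ε * ‖((u, μ) : E × ℝ) - (x, φ x)‖
  rw [Real.inner_apply]
  nlinarith [mul_le_mul_of_nonneg_left hfst hε.le]

theorem mem_basicSubdiffR_of_tendsto {φ : E → ℝ} {x v : E} {xs vs : ℕ → E}
    (hφ : ContinuousAt φ x) (hxs : Tendsto xs atTop (𝓝 x)) (hvs : Tendsto vs atTop (𝓝 v))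
    (h : ∀ᶠ k in atTop, vs k ∈ regSubdiffR φ (xs k)) : v ∈ basicSubdiffR φ x := by
  obtain ⟨N, hN⟩ := eventually_atTop.1 h
  have hshift := tendsto_add_atTop_nat N
  refine ⟨fun k => (xs (k + N), φ (xs (k + N))), fun k => (vs (k + N), -1),
    fun k => le_refl (φ (xs (k + N)) : EReal),
    fun k => mem_preNC_epiF_of_mem_regSubdiffR (hN _ (Nat.le_add_left N k)), ?_,
    (hvs.comp hshift).prodMk_nhds tendsto_const_nhds⟩
  rw [EReal.toReal_coe]
  exact (hxs.comp hshift).prodMk_nhds ((hφ.tendsto.comp hxs).comp hshift)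

theorem norm_le_of_mem_regSubdiffR {φ : E → ℝ} {x v : E} {U : Set E} {K : ℝ≥0}
    (hφ : LipschitzOnWith K φ U) (hU : U ∈ 𝓝 x) (hv : v ∈ regSubdiffR φ x) : ‖v‖ ≤ K := by
  refine le_of_forall_pos_le_add fun ε hε => ?_
  have hray : Tendsto (fun t : ℝ => x + t • v) (𝓝[>] 0) (𝓝 x) := by
    have : Continuous fun t : ℝ => x + t • v := by fun_prop
    simpa using (this.tendsto 0).mono_left nhdsWithin_le_nhds
  obtain ⟨t, ⟨hsub, htU⟩, ht : 0 < t⟩ := ((hray.eventually (mem_regSubdiffR_iff.1 hv ε hε)).and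
    (hray.eventually hU) |>.and self_mem_nhdsWithin).exists
  have hlip := hφ.dist_le_mul _ htU x (mem_of_mem_nhds hU)
  simp only [add_sub_cancel_left, real_inner_smul_right, real_inner_self_eq_norm_sq, norm_smul,
    Real.norm_eq_abs, abs_of_pos ht] at hsub
  rw [Real.dist_eq, dist_eq_norm, add_sub_cancel_left, norm_smul, Real.norm_eq_abs,
    abs_of_pos ht] at hlip
  have hsq : t * ‖v‖ ^ 2 ≤ t * ((K + ε) * ‖v‖) := by
    nlinarith [le_abs_self (φ (x + t • v) - φ x)]
  nlinarith [le_of_mul_le_mul_left hsq ht, norm_nonneg v]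

theorem LipschitzAround.nonempty_basicSubdiffR [FiniteDimensional ℝ E] {φ : E → ℝ} {x : E}
    (h : LipschitzAround φ x) : (basicSubdiffR φ x).Nonempty := by
  obtain ⟨K, R, hR, hK⟩ := h.exists_lipschitzOnWith_ball
  obtain ⟨p, -, hp₀, -, c, z, -, hz, hzmin⟩ :=
    (isCompact_closedBall x (R / 2)).exists_tendsto_penalty_minimizers
      (hK.continuousOn.mono (closedBall_subset_ball (half_lt_self hR)))
      (h := fun u => ‖u - x‖ ^ 2) (by fun_prop) (fun _ _ => sq_nonneg _)
      (mem_closedBall_self (half_pos hR).le) (by simp)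
  obtain rfl : p = x := by simpa [sub_eq_zero] using hp₀
  have hsub : ∀ᶠ k in atTop,
      -((2 * c k) • (z k - p)) ∈ regSubdiffR φ (z k) ∧ ‖-((2 * c k) • (z k - p))‖ ≤ K := by
    filter_upwards [hz.eventually (ball_mem_nhds p (half_pos hR))] with k hk
    have hv := neg_mem_regSubdiffR_of_isLocalMin_add (g := fun y => c k * ‖y - p‖ ^ 2)
      (w := (2 * c k) • (z k - p)) (c k)
      ((hzmin k).isLocalMin (closedBall_mem_nhds_of_mem hk)) fun y => le_of_eq (by
        rw [norm_sub_sq_eq_add_inner y (z k) p, real_inner_smul_left]; ring)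
    exact ⟨hv, norm_le_of_mem_regSubdiffR hK
      (isOpen_ball.mem_nhds (mem_ball.2 (hk.trans (half_lt_self hR)))) hv⟩
  obtain ⟨N, hN⟩ := eventually_atTop.1 hsub
  obtain ⟨v, -, g, hg, hv⟩ := (isCompact_closedBall (0 : E) K).tendsto_subseq
    (x := fun k => -((2 * c (k + N)) • (z (k + N) - p)))
    fun k => mem_closedBall_zero_iff.2 (hN _ (Nat.le_add_left N k)).2
  exact ⟨v, mem_basicSubdiffR_of_tendsto (hK.continuousOn.continuousAt (ball_mem_nhds p hR))
    ((hz.comp (tendsto_add_atTop_nat N)).comp hg.tendsto_atTop) hv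
    (Eventually.of_forall fun k => (hN _ (Nat.le_add_left N _)).1)⟩

theorem inv_smul_mem_regSubdiffR_of_isLocalMin_max_sq {ψ : E → ℝ} {z a : E} {U : Set E}
    {K : ℝ≥0} (hψ : LipschitzOnWith K ψ U) (hU : U ∈ 𝓝 z) (hpos : 0 < ψ z)
    (hmin : IsLocalMin (fun w => max (ψ w) 0 ^ 2 + ‖w - a‖ ^ 2) z) :
    (ψ z)⁻¹ • (a - z) ∈ regSubdiffR ψ z := by
  refine mem_regSubdiffR_of_eventually_le ((ψ z)⁻¹ * ((1 + K ^ 2) / 2)) ?_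
  filter_upwards [hmin, hU] with w hw hwU
  have hlip : |ψ w - ψ z| ≤ K * ‖w - z‖ := by
    simpa only [dist_eq_norm, Real.norm_eq_abs] using hψ.dist_le_mul w hwU z (mem_of_mem_nhds hU)
  have hsq : (ψ w - ψ z) ^ 2 ≤ K ^ 2 * ‖w - z‖ ^ 2 := by
    rw [← mul_pow, ← sq_abs]
    exact pow_le_pow_left₀ (abs_nonneg _) hlip 2
  have hmax : max (ψ w) 0 ^ 2 ≤ ψ w ^ 2 := by
    rcases le_total (ψ w) 0 with h | h
    · rw [max_eq_right h]; nlinarith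
    · rw [max_eq_left h]
  have hw' : ψ z ^ 2 + ‖z - a‖ ^ 2 ≤ max (ψ w) 0 ^ 2 + ‖w - a‖ ^ 2 := by
    simpa only [max_eq_left hpos.le] using hw
  have hexp := norm_sub_sq_eq_add_inner w z a
  have hflip : ⟪a - z, w - z⟫ = -⟪z - a, w - z⟫ := by
    rw [← inner_neg_left, neg_sub]
  -- `ψ w ^ 2 - ψ z ^ 2 = 2 ψ z (ψ w - ψ z) + (ψ w - ψ z) ^ 2`, and the last term is quadratic
  have key : ⟪a - z, w - z⟫ - (1 + K ^ 2) / 2 * ‖w - z‖ ^ 2 ≤ ψ z * (ψ w - ψ z) := by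
    nlinarith
  rw [real_inner_smul_left, mul_assoc, ← mul_sub, inv_mul_le_iff₀ hpos]
  linarith

theorem eq_of_isLocalMin_max_sq_of_nonpos {ψ : E → ℝ} {z a : E} {U : Set E} {K : ℝ≥0}
    (hψ : LipschitzOnWith K ψ U) (hU : U ∈ 𝓝 z) (hnonpos : ψ z ≤ 0)
    (hmin : IsLocalMin (fun w => max (ψ w) 0 ^ 2 + ‖w - a‖ ^ 2) z) : z = a := by
  have hseg : Tendsto (fun t : ℝ => z + t • (a - z)) (𝓝[>] 0) (𝓝 z) := by
    have : Continuous fun t : ℝ => z + t • (a - z) := by fun_prop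
    simpa using (this.tendsto 0).mono_left nhdsWithin_le_nhds
  have hsmall : ∀ᶠ t : ℝ in 𝓝[>] 0, t < 1 / (1 + K ^ 2) :=
    eventually_nhdsWithin_of_eventually_nhds (eventually_lt_nhds (by positivity))
  obtain ⟨t, ⟨⟨hmin_t, htU⟩, ht1⟩, ht : 0 < t⟩ := ((hseg.eventually hmin).and
    (hseg.eventually hU) |>.and hsmall |>.and self_mem_nhdsWithin).exists
  set D := ‖z - a‖
  have hlip : ψ (z + t • (a - z)) ≤ K * (t * D) := by
    have := hψ.dist_le_mul _ htU z (mem_of_mem_nhds hU)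
    rw [Real.dist_eq, dist_eq_norm, add_sub_cancel_left, norm_smul, Real.norm_eq_abs,
      abs_of_pos ht, norm_sub_rev] at this
    linarith [le_abs_self (ψ (z + t • (a - z)) - ψ z)]
  have hmax : max (ψ (z + t • (a - z))) 0 ^ 2 ≤ (K * (t * D)) ^ 2 :=
    pow_le_pow_left₀ (le_max_right _ _) (max_le hlip (by positivity)) 2
  have hdist : ‖z + t • (a - z) - a‖ ^ 2 = (1 - t) ^ 2 * D ^ 2 := by
    rw [show z + t • (a - z) - a = (1 - t) • (z - a) by module, norm_smul, mul_pow,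
      Real.norm_eq_abs, sq_abs]
  have hcmp : D ^ 2 ≤ max (ψ (z + t • (a - z))) 0 ^ 2 + (1 - t) ^ 2 * D ^ 2 := by
    rw [← hdist]; simpa [max_eq_right hnonpos] using hmin_t
  have hKt : (1 + K ^ 2) * t < 1 := by rwa [lt_div_iff₀' (by positivity)] at ht1
  have hD : t * D ^ 2 ≤ t * 0 := by nlinarith
  have hD₀ : D ^ 2 = 0 := le_antisymm (le_of_mul_le_mul_left hD ht) (sq_nonneg D)
  exact sub_eq_zero.1 (norm_eq_zero.1 (pow_eq_zero_iff two_ne_zero |>.1 hD₀))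

theorem exists_simplex_rescaling {ι : Type*} [Fintype ι] (α : ι → ℝ) (hα : ∀ i, 0 ≤ α i)
    (v₀ : E) (v : ι → E) :
    ∃ (l₀ : ℝ) (l : ι → ℝ), (0 ≤ l₀ ∧ (∀ i, 0 ≤ l i) ∧ l₀ + ∑ i, l i = 1) ∧
      (∀ i, 0 < l i → 0 < α i) ∧ ‖l₀ • v₀ + ∑ i, l i • v i‖ ≤ ‖v₀ + ∑ i, α i • v i‖ := by
  set σ := 1 + ∑ i, α i
  have hσ : 1 ≤ σ := le_add_of_nonneg_right (Finset.sum_nonneg fun i _ => hα i)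
  have hσ₀ : 0 < σ := by linarith
  refine ⟨σ⁻¹, fun i => σ⁻¹ * α i, ⟨by positivity, fun i => mul_nonneg (by positivity) (hα i), ?_⟩,
    fun i hi => pos_of_mul_pos_right hi (by positivity), ?_⟩
  · rw [← Finset.mul_sum, ← mul_one_add, inv_mul_cancel₀ hσ₀.ne']
  · have : σ⁻¹ • v₀ + ∑ i, (σ⁻¹ * α i) • v i = σ⁻¹ • (v₀ + ∑ i, α i • v i) := by
      simp only [smul_add, Finset.smul_sum, mul_smul]
    rw [this, norm_smul, Real.norm_eq_abs, abs_of_pos (inv_pos.2 hσ₀)]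
    exact mul_le_of_le_one_left (norm_nonneg _) (inv_le_one_of_one_le₀ hσ)

end FrechetSubgradients

section DecoupledPenalty

variable [NormedAddCommGroup E] {ι : Type*} [Fintype ι]

def decoupledInfeasibility (φ : ι → E → ℝ) (p : E × (ι → E)) : ℝ :=
  ∑ i, (max (φ i (p.2 i)) 0 ^ 2 + ‖p.2 i - p.1‖ ^ 2)

theorem decoupledInfeasibility_nonneg (φ : ι → E → ℝ) (p : E × (ι → E)) :
    0 ≤ decoupledInfeasibility φ p :=
  Finset.sum_nonneg fun _ _ => by positivity

theorem decoupledInfeasibility_diag {φ : ι → E → ℝ} {x : E} (h : ∀ i, φ i x ≤ 0) :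
    decoupledInfeasibility φ (x, fun _ => x) = 0 := by
  simp [decoupledInfeasibility, max_eq_right (h _)]

theorem decoupledInfeasibility_eq_zero {φ : ι → E → ℝ} {p : E × (ι → E)}
    (h : decoupledInfeasibility φ p = 0) : (∀ i, p.2 i = p.1) ∧ ∀ i, φ i p.1 ≤ 0 := by
  have hterm := (Finset.sum_eq_zero_iff_of_nonneg fun i _ => by positivity).1 h
  have hboth i := (add_eq_zero_iff_of_nonneg (sq_nonneg _) (sq_nonneg _)).1
    (hterm i (Finset.mem_univ i))
  have hdiag i : p.2 i = p.1 := by simpa [sub_eq_zero] using (hboth i).2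
  refine ⟨hdiag, fun i => ?_⟩
  rw [← hdiag i]
  exact max_eq_right_iff.1 (pow_eq_zero_iff two_ne_zero |>.1 (hboth i).1)

theorem decoupledInfeasibility_update [DecidableEq ι] (φ : ι → E → ℝ) (u₀ : E) (u : ι → E)
    (i : ι) (w : E) :
    decoupledInfeasibility φ (u₀, Function.update u i w) =
      decoupledInfeasibility φ (u₀, u) - (max (φ i (u i)) 0 ^ 2 + ‖u i - u₀‖ ^ 2) +
        (max (φ i w) 0 ^ 2 + ‖w - u₀‖ ^ 2) := by
  simp only [decoupledInfeasibility]
  rw [← Finset.add_sum_erase _ _ (Finset.mem_univ i),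
    ← Finset.add_sum_erase _ _ (Finset.mem_univ i), Function.update_self, Finset.sum_congr rfl fun j hj => by
      rw [Function.update_of_ne (Finset.ne_of_mem_erase hj)]]
  ring

def decoupledPenalty (φ₀ : E → ℝ) (φ : ι → E → ℝ) (x : E) (c : ℝ) (p : E × (ι → E)) : ℝ :=
  φ₀ p.1 + ‖p.1 - x‖ ^ 2 + c * decoupledInfeasibility φ p

theorem isLocalMin_max_sq_of_isLocalMin_decoupledPenalty {φ₀ : E → ℝ} {φ : ι → E → ℝ}
    {x : E} {c : ℝ} {u₀ : E} {u : ι → E} (hc : 0 < c)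
    (hmin : IsLocalMin (decoupledPenalty φ₀ φ x c) (u₀, u)) (i : ι) :
    IsLocalMin (fun w => max (φ i w) 0 ^ 2 + ‖w - u₀‖ ^ 2) (u i) := by
  classical
  have hloc : ∀ᶠ w in 𝓝 (u i),
      decoupledPenalty φ₀ φ x c (u₀, u) ≤ decoupledPenalty φ₀ φ x c (u₀, Function.update u i w) :=
    ((continuous_const.prodMk (continuous_const.update i continuous_id)).tendsto' (u i) (u₀, u)
      (by simp)).eventually hmin
  refine hloc.mono fun w hw => le_of_mul_le_mul_left ?_ hc
  simp only [decoupledPenalty, decoupledInfeasibility_update] at hw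
  linarith

theorem decoupledInfeasibility_fst [InnerProductSpace ℝ E] (φ : ι → E → ℝ) (u₀ y : E)
    (u : ι → E) :
    decoupledInfeasibility φ (y, u) = decoupledInfeasibility φ (u₀, u) +
      2 * ⟪∑ i, (u₀ - u i), y - u₀⟫ + Fintype.card ι * ‖y - u₀‖ ^ 2 := by
  have hi : ∀ i, ‖u i - y‖ ^ 2 = ‖u i - u₀‖ ^ 2 + 2 * ⟪u₀ - u i, y - u₀⟫ + ‖y - u₀‖ ^ 2 :=
    fun i => by rw [norm_sub_rev, norm_sub_rev (u i), norm_sub_sq_eq_add_inner y u₀]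
  simp only [decoupledInfeasibility, hi, sum_inner, Finset.mul_sum, Finset.sum_add_distrib,
    Finset.sum_const, Finset.card_univ, nsmul_eq_mul]
  ring

end DecoupledPenalty

section FuzzyFritzJohn

variable [NormedAddCommGroup E] [InnerProductSpace ℝ E] {ι : Type*} [Fintype ι]

theorem neg_mem_regSubdiffR_of_isLocalMin_decoupledPenalty {φ₀ : E → ℝ} {φ : ι → E → ℝ}
    {x : E} {c : ℝ} {u₀ : E} {u : ι → E} (hmin : IsLocalMin (decoupledPenalty φ₀ φ x c) (u₀, u)) :
    -((2 : ℝ) • (u₀ - x) + (2 * c) • ∑ i, (u₀ - u i)) ∈ regSubdiffR φ₀ u₀ := by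
  have hloc : ∀ᶠ y in 𝓝 u₀, decoupledPenalty φ₀ φ x c (u₀, u) ≤ decoupledPenalty φ₀ φ x c (y, u) :=
    ((continuous_id.prodMk continuous_const).tendsto' u₀ (u₀, u) rfl).eventually hmin
  refine neg_mem_regSubdiffR_of_isLocalMin_add
    (g := fun y => ‖y - x‖ ^ 2 + c * decoupledInfeasibility φ (y, u)) (1 + c * Fintype.card ι)
    (hloc.mono fun y hy => ?_) fun y => le_of_eq ?_
  · simp only [decoupledPenalty] at hy
    linarith
  · rw [decoupledInfeasibility_fst φ u₀ y, norm_sub_sq_eq_add_inner y u₀ x, inner_add_left,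
      real_inner_smul_left, real_inner_smul_left]
    ring

def FuzzyFritzJohn (φ₀ : E → ℝ) (φ : ι → E → ℝ) (x : E) (K δ : ℝ) : Prop :=
  ∃ (l₀ : ℝ) (l : ι → ℝ) (u₀ : E) (u : ι → E) (v₀ : E) (v : ι → E),
    (0 ≤ l₀ ∧ (∀ i, 0 ≤ l i) ∧ l₀ + ∑ i, l i = 1) ∧
    (dist u₀ x ≤ δ ∧ ∀ i, dist (u i) x ≤ δ) ∧
    (v₀ ∈ regSubdiffR φ₀ u₀ ∧ ∀ i, 0 < l i → v i ∈ regSubdiffR (φ i) (u i) ∧ 0 ≤ φ i (u i)) ∧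
    (‖v₀‖ ≤ K ∧ ∀ i, ‖v i‖ ≤ K) ∧ ‖l₀ • v₀ + ∑ i, l i • v i‖ ≤ δ

theorem FuzzyFritzJohn.mono {φ₀ : E → ℝ} {φ : ι → E → ℝ} {x : E} {K δ δ' : ℝ}
    (h : FuzzyFritzJohn φ₀ φ x K δ) (hδ : δ ≤ δ') : FuzzyFritzJohn φ₀ φ x K δ' := by
  obtain ⟨l₀, l, u₀, u, v₀, v, hl, ⟨hu₀, hu⟩, hv, hK, hres⟩ := h
  exact ⟨l₀, l, u₀, u, v₀, v, hl, ⟨hu₀.trans hδ, fun i => (hu i).trans hδ⟩, hv, hK, hres.trans hδ⟩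

theorem fuzzyFritzJohn_of_isLocalMin_decoupledPenalty {φ₀ : E → ℝ} {φ : ι → E → ℝ} {x : E}
    {U : Set E} {K : ℝ≥0} {c : ℝ} {u₀ : E} {u : ι → E} (hφ₀ : LipschitzOnWith K φ₀ U)
    (hφ : ∀ i, LipschitzOnWith K (φ i) U) (hU₀ : U ∈ 𝓝 u₀) (hU : ∀ i, U ∈ 𝓝 (u i))
    (hc : 0 < c) (hmin : IsLocalMin (decoupledPenalty φ₀ φ x c) (u₀, u)) :
    FuzzyFritzJohn φ₀ φ x K (2 * dist (u₀, u) (x, fun _ => x)) := by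
  set v₀ := -((2 : ℝ) • (u₀ - x) + (2 * c) • ∑ i, (u₀ - u i))
  have hv₀ : v₀ ∈ regSubdiffR φ₀ u₀ := neg_mem_regSubdiffR_of_isLocalMin_decoupledPenalty hmin
  have hblock := isLocalMin_max_sq_of_isLocalMin_decoupledPenalty hc hmin
  set α : ι → ℝ := fun i => 2 * c * max (φ i (u i)) 0
  set v : ι → E := fun i => if 0 < φ i (u i) then (φ i (u i))⁻¹ • (u₀ - u i) else 0
  have hv i (hi : 0 < φ i (u i)) : v i ∈ regSubdiffR (φ i) (u i) := by
    simpa only [v, if_pos hi] using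
      inv_smul_mem_regSubdiffR_of_isLocalMin_max_sq (hφ i) (hU i) hi (hblock i)
  have hvK i : ‖v i‖ ≤ K := by
    by_cases hi : 0 < φ i (u i)
    · exact norm_le_of_mem_regSubdiffR (hφ i) (hU i) (hv i hi)
    · simp [v, if_neg hi]
  have hαv i : α i • v i = (2 * c) • (u₀ - u i) := by
    by_cases hi : 0 < φ i (u i)
    · simp only [α, v, if_pos hi, max_eq_left hi.le, smul_smul]
      congr 1
      field_simp
    · rw [eq_of_isLocalMin_max_sq_of_nonpos (hφ i) (hU i) (not_lt.1 hi) (hblock i)]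
      simp [α, max_eq_right (not_lt.1 hi)]
  have hres : v₀ + ∑ i, α i • v i = -((2 : ℝ) • (u₀ - x)) := by
    simp only [v₀, hαv, ← Finset.smul_sum]
    abel
  obtain ⟨l₀, l, hl, hlα, hnorm⟩ := exists_simplex_rescaling α (fun i => by positivity) v₀ v
  have hd₀ : dist u₀ x ≤ dist (u₀, u) (x, fun _ => x) := by
    rw [Prod.dist_eq]; exact le_max_left _ _
  have hd i : dist (u i) x ≤ dist (u₀, u) (x, fun _ => x) :=
    (dist_le_pi_dist u (fun _ => x) i).trans (by rw [Prod.dist_eq]; exact le_max_right _ _)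
  have hd_nonneg := dist_nonneg (x := (u₀, u)) (y := (x, fun _ => x))
  refine ⟨l₀, l, u₀, u, v₀, v, hl, ⟨by linarith, fun i => by linarith [hd i]⟩,
    ⟨hv₀, fun i hi => ?_⟩, ⟨norm_le_of_mem_regSubdiffR hφ₀ hU₀ hv₀, hvK⟩, ?_⟩
  · have hpos : 0 < φ i (u i) :=
      (lt_max_iff.1 (pos_of_mul_pos_right (hlα i hi) (by positivity))).resolve_right (lt_irrefl 0)
    exact ⟨hv i hpos, hpos.le⟩
  · rw [hres, norm_neg, norm_smul, ← dist_eq_norm, Real.norm_two] at hnorm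
    linarith

theorem forall_fuzzyFritzJohn_of_ball [FiniteDimensional ℝ E] {φ₀ : E → ℝ}
    {φ : ι → E → ℝ} {x : E} {R : ℝ} {K : ℝ≥0} (hR : 0 < R)
    (hφ₀ : LipschitzOnWith K φ₀ (ball x R)) (hφ : ∀ i, LipschitzOnWith K (φ i) (ball x R))
    (hfeas : ∀ i, φ i x ≤ 0) (hmin : ∀ u ∈ ball x R, (∀ i, φ i u ≤ 0) → φ₀ x ≤ φ₀ u) :
    ∀ δ > 0, FuzzyFritzJohn φ₀ φ x K δ := by
  intro δ hδ
  set q : E × (ι → E) := (x, fun _ => x)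
  have hball (p : E × (ι → E)) (hp : dist p q < R) : p.1 ∈ ball x R ∧ ∀ i, p.2 i ∈ ball x R := by
    rw [Prod.dist_eq, max_lt_iff] at hp
    exact ⟨hp.1, fun i => (dist_le_pi_dist p.2 q.2 i).trans_lt hp.2⟩
  have hcl (p) (hp : p ∈ closedBall q (R / 2)) := hball p (hp.trans_lt (half_lt_self hR))
  obtain ⟨p, hpK, hp₀, hpf, c, z, hc, hz, hzmin⟩ :=
    (isCompact_closedBall q (R / 2)).exists_tendsto_penalty_minimizers
      (f := fun p => φ₀ p.1 + ‖p.1 - x‖ ^ 2) (h := decoupledInfeasibility φ)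
      ((hφ₀.continuousOn.comp continuous_fst.continuousOn fun p hp => (hcl p hp).1).add
        (by fun_prop))
      (continuousOn_finsetSum _ fun i _ => (((hφ i).continuousOn.comp
        ((continuous_apply i).comp continuous_snd).continuousOn fun p hp => (hcl p hp).2 i).sup
          continuousOn_const).pow 2 |>.add (by fun_prop))
      (fun p _ => decoupledInfeasibility_nonneg φ p) (mem_closedBall_self (half_pos hR).le)
      (decoupledInfeasibility_diag hfeas)
  obtain ⟨hdiag, hpfeas⟩ := decoupledInfeasibility_eq_zero hp₀
  have hp₁ : p.1 = x := by
    have hopt := hmin p.1 (hcl p hpK).1 hpfeas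
    simp only [q, sub_self, norm_zero] at hpf
    have hsq : ‖p.1 - x‖ ^ 2 = 0 := le_antisymm (by linarith) (sq_nonneg _)
    simpa [sub_eq_zero] using hsq
  obtain rfl : p = q := Prod.ext hp₁ (funext fun i => (hdiag i).trans hp₁)
  obtain ⟨k, hk⟩ := (hz.eventually (ball_mem_nhds q (lt_min (half_pos hδ) (half_pos hR)))).exists
  have hkR : dist (z k) q < R / 2 := hk.trans_le (min_le_right _ _)
  have hzU := hball (z k) (hkR.trans (half_lt_self hR))
  refine (fuzzyFritzJohn_of_isLocalMin_decoupledPenalty hφ₀ hφ (isOpen_ball.mem_nhds hzU.1)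
    (fun i => isOpen_ball.mem_nhds (hzU.2 i)) (hc k)
    ((hzmin k).isLocalMin (closedBall_mem_nhds_of_mem hkR))).mono ?_
  linarith [hk.trans_le (min_le_left _ _)]

theorem exists_forall_fuzzyFritzJohn [FiniteDimensional ℝ E] {φ₀ : E → ℝ} {φ : ι → E → ℝ}
    {x : E} (hfeas : ∀ i, φ i x ≤ 0)
    (hmin : ∃ U ∈ 𝓝 x, ∀ u ∈ U, (∀ i, φ i u ≤ 0) → φ₀ x ≤ φ₀ u)
    (hlip₀ : LipschitzAround φ₀ x) (hlip : ∀ i, LipschitzAround (φ i) x) :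
    ∃ K : ℝ, ∀ δ > 0, FuzzyFritzJohn φ₀ φ x K δ := by
  obtain ⟨U, hU, hUmin⟩ := hmin
  obtain ⟨R₁, hR₁, hR₁U⟩ := Metric.mem_nhds_iff.1 hU
  obtain ⟨K, R₂, hR₂, hK⟩ := exists_lipschitzOnWith_ball_of_forall_lipschitzAround
    (φ := fun j : Option ι => j.elim φ₀ φ) (x := x) (Option.rec hlip₀ hlip)
  have hsub : ball x (min R₁ R₂) ⊆ ball x R₂ := ball_subset_ball (min_le_right _ _)
  exact ⟨K, forall_fuzzyFritzJohn_of_ball (lt_min hR₁ hR₂) ((hK none).mono hsub)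
    (fun i => (hK (some i)).mono hsub) hfeas
    fun u hu => hUmin u (hR₁U (ball_subset_ball (min_le_left _ _) hu))⟩

theorem exists_fritzJohn_of_forall_fuzzyFritzJohn [FiniteDimensional ℝ E] {φ₀ : E → ℝ}
    {φ : ι → E → ℝ} {x : E} {K : ℝ} (hφ₀ : ContinuousAt φ₀ x) (hφ : ∀ i, ContinuousAt (φ i) x)
    (h : ∀ δ > 0, FuzzyFritzJohn φ₀ φ x K δ) :
    ∃ (l₀ : ℝ) (l : ι → ℝ) (v₀ : E) (v : ι → E), (0 ≤ l₀ ∧ (∀ i, 0 ≤ l i) ∧ l₀ + ∑ i, l i = 1) ∧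
      v₀ ∈ basicSubdiffR φ₀ x ∧ (∀ i, 0 < l i → v i ∈ basicSubdiffR (φ i) x ∧ 0 ≤ φ i x) ∧
      l₀ • v₀ + ∑ i, l i • v i = 0 := by
  choose l₀ l u₀ u v₀ v hl hu hv hK hres using fun k : ℕ => h (1 / ((k : ℝ) + 1)) (by positivity)
  have hcompact : IsCompact (Set.Icc (0 : ℝ) 1 ×ˢ Set.univ.pi (fun _ : ι => Set.Icc (0 : ℝ) 1) ×ˢ
      closedBall (0 : E) K ×ˢ Set.univ.pi fun _ : ι => closedBall (0 : E) K) :=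
    isCompact_Icc.prod ((isCompact_univ_pi fun _ => isCompact_Icc).prod
      ((isCompact_closedBall _ _).prod (isCompact_univ_pi fun _ => isCompact_closedBall _ _)))
  have hl_le k i : l k i ≤ 1 := by
    linarith [(hl k).1, (hl k).2.2,
      Finset.single_le_sum (fun j _ => (hl k).2.1 j) (Finset.mem_univ i)]
  have hl₀_le k : l₀ k ≤ 1 := by
    linarith [(hl k).2.2, Finset.sum_nonneg fun j (_ : j ∈ Finset.univ) => (hl k).2.1 j]
  obtain ⟨⟨L₀, L, V₀, V⟩, -, g, hg, hlim⟩ := hcompact.tendsto_subseq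
    (x := fun k => (l₀ k, l k, v₀ k, v k)) fun k =>
      ⟨⟨(hl k).1, hl₀_le k⟩, fun i _ => ⟨(hl k).2.1 i, hl_le k i⟩,
        mem_closedBall_zero_iff.2 (hK k).1, fun i _ => mem_closedBall_zero_iff.2 ((hK k).2 i)⟩
  have hδ : Tendsto (fun k => 1 / ((g k : ℝ) + 1)) atTop (𝓝 0) :=
    (tendsto_one_div_add_atTop_nhds_zero_nat (𝕜 := ℝ)).comp hg.tendsto_atTop
  have hL₀ : Tendsto (fun k => l₀ (g k)) atTop (𝓝 L₀) := hlim.fst_nhds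
  have hL i : Tendsto (fun k => l (g k) i) atTop (𝓝 (L i)) :=
    tendsto_pi_nhds.1 hlim.snd_nhds.fst_nhds i
  have hV₀ : Tendsto (fun k => v₀ (g k)) atTop (𝓝 V₀) := hlim.snd_nhds.snd_nhds.fst_nhds
  have hV i : Tendsto (fun k => v (g k) i) atTop (𝓝 (V i)) :=
    tendsto_pi_nhds.1 hlim.snd_nhds.snd_nhds.snd_nhds i
  have hpt {y : ℕ → E} (hy : ∀ k, dist (y k) x ≤ 1 / ((k : ℝ) + 1)) :
      Tendsto (fun k => y (g k)) atTop (𝓝 x) :=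
    tendsto_iff_dist_tendsto_zero.2 (squeeze_zero (fun _ => dist_nonneg) (fun k => hy (g k)) hδ)
  refine ⟨L₀, L, V₀, V, ⟨ge_of_tendsto' hL₀ fun k => (hl (g k)).1,
    fun i => ge_of_tendsto' (hL i) fun k => (hl (g k)).2.1 i, ?_⟩,
    mem_basicSubdiffR_of_tendsto hφ₀ (hpt fun k => (hu k).1) hV₀
      (Eventually.of_forall fun k => (hv (g k)).1), fun i hi => ?_, ?_⟩
  · refine tendsto_nhds_unique (hL₀.add (tendsto_finsetSum Finset.univ fun i _ => hL i)) ?_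
    simpa only [(hl _).2.2] using tendsto_const_nhds
  · have hev : ∀ᶠ k in atTop, 0 < l (g k) i := (hL i).eventually (eventually_gt_nhds hi)
    have hui := hpt fun k => (hu k).2 i
    exact ⟨mem_basicSubdiffR_of_tendsto (hφ i) hui (hV i)
        (hev.mono fun k hk => ((hv (g k)).2 i hk).1),
      ge_of_tendsto ((hφ i).tendsto.comp hui) (hev.mono fun k hk => ((hv (g k)).2 i hk).2)⟩
  · have hnorm := ((hL₀.smul hV₀).add
      (tendsto_finsetSum Finset.univ fun i _ => (hL i).smul (hV i))).norm
    exact norm_le_zero_iff.1 (le_of_tendsto_of_tendsto' hnorm hδ fun k => hres (g k))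

end FuzzyFritzJohn

/-- Fritz John type necessary optimality conditions for Lipschitzian programs. -/
theorem lipschitz_program_necessary {n m : ℕ}
    (φ₀ : EuclideanSpace ℝ (Fin n) → ℝ) (φ : Fin m → EuclideanSpace ℝ (Fin n) → ℝ) (xbar : EuclideanSpace ℝ (Fin n))
    (hfeas : ∀ i, φ i xbar ≤ 0)
    (hmin : ∃ U ∈ 𝓝 xbar, ∀ u ∈ U, (∀ i, φ i u ≤ 0) → φ₀ xbar ≤ φ₀ u)
    (hlip₀ : LipschitzAround φ₀ xbar) (hlip : ∀ i, LipschitzAround (φ i) xbar) :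
    ∃ (l₀ : ℝ) (l : Fin m → ℝ),
      (0 ≤ l₀ ∧ ∀ i, 0 ≤ l i) ∧
      (l₀ + ∑ i, l i ≠ 0) ∧
      (∀ i, l i * φ i xbar = 0) ∧
      ∃ (v₀ : EuclideanSpace ℝ (Fin n)) (v : Fin m → EuclideanSpace ℝ (Fin n)),
        v₀ ∈ basicSubdiffR φ₀ xbar ∧ (∀ i, v i ∈ basicSubdiffR (φ i) xbar) ∧
        l₀ • v₀ + ∑ i, l i • v i = 0 := by
  obtain ⟨K, hK⟩ := exists_forall_fuzzyFritzJohn hfeas hmin hlip₀ hlip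
  obtain ⟨l₀, l, v₀, v, ⟨hl₀, hl, hsum⟩, hv₀, hv, hstat⟩ :=
    exists_fritzJohn_of_forall_fuzzyFritzJohn hlip₀.continuousAt (fun i => (hlip i).continuousAt) hK
  choose w hw using fun i => (hlip i).nonempty_basicSubdiffR
  have hzero i (hi : ¬0 < l i) : l i = 0 := le_antisymm (not_lt.1 hi) (hl i)
  refine ⟨l₀, l, ⟨hl₀, hl⟩, by rw [hsum]; exact one_ne_zero, fun i => ?_,
    v₀, fun i => if 0 < l i then v i else w i, hv₀, fun i => ?_, ?_⟩
  · by_cases hi : 0 < l i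
    · rw [le_antisymm (hfeas i) (hv i hi).2, mul_zero]
    · rw [hzero i hi, zero_mul]
  · by_cases hi : 0 < l i
    · simpa only [if_pos hi] using (hv i hi).1
    · simpa only [if_neg hi] using hw i
  · rw [← hstat]
    congr 1
    refine Finset.sum_congr rfl fun i _ => ?_
    by_cases hi : 0 < l i
    · simp only [if_pos hi]
    · rw [hzero i hi, zero_smul, zero_smul]

end
end

section
/- Let (x̄,ȳ) be a feasible solution to problem (P) at which (P) is partially calm with constant κ > 0, and let ψ be continuous at (x̄,ȳ). Then (x̄,ȳ) is a local optimal solution to the penalized problem: minimize ψ(x,y) + κ(φ(x,y) − ϑ(x)) subject to gⱼ(x) ≤ 0 for j = 1,…,s and fᵢ(x,y) ≤ 0 for i = 1,…,r. -/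
open Filter Topology RealInnerProductSpace

noncomputable section

variable {E Y : Type*}

/-!
Feasibility forces `ϑ(x̄) = φ(x̄,ȳ)`, so the penalized objective at `(x̄,ȳ)` is `ψ(x̄,ȳ)`. At a
nearby point `(x,y)` feasible for the lower-level constraints, `ν := ϑ(x) - φ(x,y) ≤ 0` makes
`(x,y,ν)` feasible for the perturbed problem. If `|ν|` is below the radius `δ` of the calmness
neighbourhood, partial calmness is exactly the penalized inequality; otherwise the penalty
`κ|ν| ≥ κδ` exceeds the drop `ψ(x̄,ȳ) - ψ(x,y)`, which continuity of `ψ` keeps below `κδ`.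
If `ϑ(x) = -∞` the penalty is `+∞`.
-/

theorem valueFn_le_of_mem {φ : E × Y → ℝ} {F : E → Set Y} {x : E} {y : Y} (hy : y ∈ F x) :
    valueFn φ F x ≤ φ (x, y) :=
  sInf_le ⟨y, hy, rfl⟩

theorem FeasibleP.valueFn_eq {r s : ℕ} {φ : E × Y → ℝ} {f : Fin r → E × Y → ℝ}
    {g : Fin s → E → ℝ} {x : E} {y : Y} (h : FeasibleP φ f g x y) :
    valueFn φ (lowerF f) x = φ (x, y) :=
  le_antisymm (valueFn_le_of_mem h.2.1) h.2.2

theorem valueFn_lowerF_le {r : ℕ} {φ : E × Y → ℝ} {f : Fin r → E × Y → ℝ} {p : E × Y}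
    (hp : ∀ i, f i p ≤ 0) : valueFn φ (lowerF f) p.1 ≤ φ p :=
  valueFn_le_of_mem (y := p.2) hp

theorem EReal.coe_le_add_mul_sub_of_forall_eq_coe {a b d κ : ℝ} {v : EReal} (hκ : 0 < κ)
    (hv : v ≤ b) (h : ∀ c : ℝ, v = c → a ≤ d + κ * (b - c)) :
    (a : EReal) ≤ d + κ * (b - v) := by
  induction v using EReal.rec with
  | bot =>
    rw [EReal.sub_bot (EReal.coe_ne_bot _), EReal.mul_top_of_pos (by exact_mod_cast hκ),
      EReal.add_top_of_ne_bot (EReal.coe_ne_bot _)]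
    exact le_top
  | top => exact absurd hv (EReal.coe_lt_top b).not_ge
  | coe c => exact_mod_cast h c rfl

section PartialCalmness

variable [NormedAddCommGroup E] [NormedAddCommGroup Y] {r s : ℕ} {φ ψ : E × Y → ℝ}
  {f : Fin r → E × Y → ℝ} {g : Fin s → E → ℝ} {x : E} {y : Y} {κ : ℝ}

theorem PartiallyCalm.exists_pos_eventually (h : PartiallyCalm φ ψ f g x y κ) :
    ∃ δ > 0, ∀ᶠ p in 𝓝 (x, y), ∀ ν : ℝ, |ν| < δ → (∀ j, g j p.1 ≤ 0) → (∀ i, f i p ≤ 0) →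
      ((φ p + ν : ℝ) : EReal) = valueFn φ (lowerF f) p.1 → ψ (x, y) ≤ ψ p + κ * |ν| := by
  obtain ⟨U, hU, hcalm⟩ := h
  have hU' : (Homeomorph.prodAssoc E Y ℝ) ⁻¹' U ∈ 𝓝 ((x, y), (0 : ℝ)) :=
    (Homeomorph.prodAssoc E Y ℝ).continuous.continuousAt.preimage_mem_nhds hU
  obtain ⟨u, hu, v, hv, huv⟩ := mem_nhds_prod_iff.mp hU'
  obtain ⟨δ, hδ, hball⟩ := Metric.mem_nhds_iff.mp hv
  refine ⟨δ, hδ, ?_⟩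
  filter_upwards [hu] with p hp ν hν hg hf hval
  exact hcalm (p.1, p.2, ν) (huv (a := (p, ν)) ⟨hp, hball (by simpa using hν)⟩) hg hf hval

theorem PartiallyCalm.eventually_le_add_mul_sub (h : PartiallyCalm φ ψ f g x y κ) (hκ : 0 < κ)
    (hcont : ContinuousAt ψ (x, y)) :
    ∀ᶠ p in 𝓝 (x, y), (∀ j, g j p.1 ≤ 0) → (∀ i, f i p ≤ 0) →
      ∀ c : ℝ, valueFn φ (lowerF f) p.1 = c → ψ (x, y) ≤ ψ p + κ * (φ p - c) := by
  obtain ⟨δ, hδ, hcalm⟩ := h.exists_pos_eventually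
  have hψ : ∀ᶠ p in 𝓝 (x, y), ψ (x, y) - κ * δ < ψ p :=
    hcont.eventually (eventually_gt_nhds (sub_lt_self _ (mul_pos hκ hδ)))
  filter_upwards [hcalm, hψ] with p hcalm_p hψ_p hg hf c hc
  have hcφ : c ≤ φ p := by exact_mod_cast hc ▸ valueFn_lowerF_le (φ := φ) hf
  have habs : |c - φ p| = φ p - c := by rw [abs_sub_comm, abs_of_nonneg (sub_nonneg.2 hcφ)]
  rcases lt_or_ge (φ p - c) δ with hsmall | hlarge
  · have hval : ((φ p + (c - φ p) : ℝ) : EReal) = valueFn φ (lowerF f) p.1 := by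
      rw [hc, add_sub_cancel]
    simpa only [habs] using hcalm_p (c - φ p) (habs ▸ hsmall) hg hf hval
  · linarith [mul_le_mul_of_nonneg_left hlarge hκ.le]

end PartialCalmness

/-- Partial calmness yields local optimality in the penalized problem. -/
theorem partial_calmness_penalization {n m r s : ℕ}
    (φ ψ : EuclideanSpace ℝ (Fin n) × EuclideanSpace ℝ (Fin m) → ℝ) (f : Fin r → EuclideanSpace ℝ (Fin n) × EuclideanSpace ℝ (Fin m) → ℝ) (g : Fin s → EuclideanSpace ℝ (Fin n) → ℝ)
    (xbar : EuclideanSpace ℝ (Fin n)) (ybar : EuclideanSpace ℝ (Fin m)) (κ : ℝ) (hκ : 0 < κ)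
    (hfeas : FeasibleP φ f g xbar ybar)
    (hcalm : PartiallyCalm φ ψ f g xbar ybar κ)
    (hcont : ContinuousAt ψ (xbar, ybar)) :
    LocalOptPen φ ψ f g xbar ybar κ := by
  refine Filter.eventually_iff_exists_mem.mp ?_
  filter_upwards [hcalm.eventually_le_add_mul_sub hκ hcont] with p hp hg hf
  rw [hfeas.valueFn_eq, ← EReal.coe_sub, sub_self, EReal.coe_zero, mul_zero, add_zero]
  exact EReal.coe_le_add_mul_sub_of_forall_eq_coe hκ (valueFn_lowerF_le hf) (hp hg hf)

end
end

section
/- Let Ω ⊆ ℝⁿ and x̄ ∈ Ω. Then v ∈ N̂(x̄;Ω) if and only if there exists a function ψ : ℝⁿ → ℝ that is Fréchet differentiable at x̄ with ∇ψ(x̄) = v and achieves at x̄ its local maximum relative to Ω (i.e., there is a neighborhood U of x̄ with ψ(x) ≤ ψ(x̄) for all x ∈ Ω ∩ U). -/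
/-!
The backward implication is the first-order necessary condition for a local maximum: the
linearization `⟪v, u - x̄⟫` of `ψ` differs from `ψ u - ψ x̄ ≤ 0` by `o(‖u - x̄‖)`.

For the forward implication only differentiability at `x̄` is required, so `ψ` may be discontinuous
elsewhere: subtracting from `⟪v, ·⟫` the positive part of `⟪v, · - x̄⟫` on `Ω` makes `x̄` a
maximizer over `Ω`, and the subtracted term is `o(‖u - x̄‖)` precisely because `v` is a prenormal.
-/

open Filter Topology RealInnerProductSpace

noncomputable section

variable {E Y : Type*}

theorem isLocalMaxOn_iff_exists_mem_nhds {α β : Type*} [TopologicalSpace α] [Preorder β]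
    {f : α → β} {s : Set α} {a : α} :
    IsLocalMaxOn f s a ↔ ∃ U ∈ 𝓝 a, ∀ u ∈ s ∩ U, f u ≤ f a := by
  rw [IsLocalMaxOn, IsMaxFilter, eventually_nhdsWithin_iff, eventually_iff_exists_mem]
  exact exists_congr fun U => and_congr_right fun _ =>
    ⟨fun h u hu => h u hu.2 hu.1, fun h u hU hs => h u ⟨hs, hU⟩⟩

section Prenormal

variable [NormedAddCommGroup E]

theorem mem_preNC_iff_eventually [Inner ℝ E] {Ω : Set E} {x v : E} :
    v ∈ preNC Ω x ↔ ∀ ε > 0, ∀ᶠ u in 𝓝[Ω] x, ⟪v, u - x⟫ ≤ ε * ‖u - x‖ := by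
  simp only [preNC, Set.mem_ofPred_eq, eventually_nhdsWithin_iff, Metric.eventually_nhds_iff,
    dist_eq_norm]
  exact forall₂_congr fun ε _ => exists_congr fun δ => and_congr_right fun _ =>
    ⟨fun h _ hu hΩ => h _ hΩ hu, fun h _ hΩ hu => h hu hΩ⟩

variable [NormedSpace ℝ E]

theorem IsLocalMaxOn.eventually_le_of_hasFDerivAt {Ω : Set E} {x : E} {ψ : E → ℝ}
    {φ : E →L[ℝ] ℝ} (hψ : HasFDerivAt ψ φ x) (hmax : IsLocalMaxOn ψ Ω x) {ε : ℝ} (hε : 0 < ε) :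
    ∀ᶠ u in 𝓝[Ω] x, φ (u - x) ≤ ε * ‖u - x‖ := by
  have hlin : ∀ᶠ u in 𝓝[Ω] x, ‖ψ u - ψ x - φ (u - x)‖ ≤ ε * ‖u - x‖ :=
    nhdsWithin_le_nhds (hψ.isLittleO.def hε)
  filter_upwards [hlin, hmax] with u hu hmax_u
  rw [Real.norm_eq_abs, abs_le] at hu
  linarith [hu.1, hmax_u]

theorem hasFDerivAt_indicator_max_zero {Ω : Set E} {x : E} {g : E → ℝ} (hgx : g x = 0)
    (hg : ∀ ε > 0, ∀ᶠ u in 𝓝[Ω] x, g u ≤ ε * ‖u - x‖) :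
    HasFDerivAt (Ω.indicator fun u => max (g u) 0) (0 : E →L[ℝ] ℝ) x := by
  have hx : Ω.indicator (fun u => max (g u) 0) x = 0 := by
    by_cases hxΩ : x ∈ Ω <;> simp [hxΩ, hgx]
  refine hasFDerivAt_iff_isLittleO.mpr <| Asymptotics.IsLittleO.of_bound fun ε hε => ?_
  filter_upwards [eventually_nhdsWithin_iff.mp (hg ε hε)] with u hu
  have hε_nonneg : 0 ≤ ε * ‖u - x‖ := by positivity
  by_cases huΩ : u ∈ Ω
  · simpa [hx, huΩ, abs_of_nonneg] using ⟨hu huΩ, hε_nonneg⟩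
  · simpa [hx, huΩ] using hε_nonneg

end Prenormal

section InnerProductSpace

variable [NormedAddCommGroup E] [InnerProductSpace ℝ E] {Ω : Set E} {x v : E}

theorem mem_preNC_of_hasFDerivAt_of_isLocalMaxOn {ψ : E → ℝ} (hψ : HasFDerivAt ψ (innerSL ℝ v) x)
    (hmax : IsLocalMaxOn ψ Ω x) : v ∈ preNC Ω x :=
  mem_preNC_iff_eventually.mpr fun _ hε => by
    simpa using hmax.eventually_le_of_hasFDerivAt hψ hε

theorem exists_hasFDerivAt_isMaxOn_of_mem_preNC (hv : v ∈ preNC Ω x) :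
    ∃ ψ : E → ℝ, HasFDerivAt ψ (innerSL ℝ v) x ∧ IsMaxOn ψ Ω x := by
  set θ := Ω.indicator fun u => max ⟪v, u - x⟫ 0
  have hθ : HasFDerivAt θ 0 x :=
    hasFDerivAt_indicator_max_zero (by simp) (mem_preNC_iff_eventually.mp hv)
  refine ⟨fun u => innerSL ℝ v u - θ u,
    ((innerSL ℝ v).hasFDerivAt.sub hθ).congr_fderiv (sub_zero _), ?_⟩
  have hθx : θ x = 0 := by by_cases hxΩ : x ∈ Ω <;> simp [θ, hxΩ]
  intro u hu
  have hθu : θ u = max ⟪v, u - x⟫ 0 := Set.indicator_of_mem hu _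
  show innerSL ℝ v u - θ u ≤ innerSL ℝ v x - θ x
  rw [innerSL_apply_apply, innerSL_apply_apply, hθx, hθu]
  linarith [inner_sub_right (𝕜 := ℝ) v u x, le_max_left ⟪v, u - x⟫ 0]

theorem mem_preNC_iff_exists_hasFDerivAt_isLocalMaxOn :
    v ∈ preNC Ω x ↔ ∃ ψ : E → ℝ, HasFDerivAt ψ (innerSL ℝ v) x ∧ IsLocalMaxOn ψ Ω x :=
  ⟨fun hv => (exists_hasFDerivAt_isMaxOn_of_mem_preNC hv).imp fun _ h => ⟨h.1, h.2.localize⟩,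
    fun ⟨_, hψ, hmax⟩ => mem_preNC_of_hasFDerivAt_of_isLocalMaxOn hψ hmax⟩

end InnerProductSpace

theorem prenormal_smooth_description_general {n : ℕ}
    (Ω : Set (EuclideanSpace ℝ (Fin n))) (xbar : EuclideanSpace ℝ (Fin n)) (v : EuclideanSpace ℝ (Fin n)) :
    v ∈ preNC Ω xbar ↔
      ∃ ψ : EuclideanSpace ℝ (Fin n) → ℝ, HasFDerivAt ψ (innerSL ℝ v) xbar ∧
        ∃ U ∈ 𝓝 xbar, ∀ u ∈ Ω ∩ U, ψ u ≤ ψ xbar := by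
  simp_rw [← isLocalMaxOn_iff_exists_mem_nhds]
  exact mem_preNC_iff_exists_hasFDerivAt_isLocalMaxOn

/-- Smooth variational description of prenormal vectors. -/
theorem prenormal_smooth_description {n : ℕ}
    (Ω : Set (EuclideanSpace ℝ (Fin n))) (xbar : EuclideanSpace ℝ (Fin n)) (hx : xbar ∈ Ω) (v : EuclideanSpace ℝ (Fin n)) :
    v ∈ preNC Ω xbar ↔
      ∃ ψ : EuclideanSpace ℝ (Fin n) → ℝ, HasFDerivAt ψ (innerSL ℝ v) xbar ∧
        ∃ U ∈ 𝓝 xbar, ∀ u ∈ Ω ∩ U, ψ u ≤ ψ xbar :=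
  prenormal_smooth_description_general Ω xbar v

end
end

section
/- Let φ₁ : ℝⁿ → ℝ∪{+∞} and φ₂ : ℝⁿ → ℝ be finite at x̄ and assume that ∂̂φ₂(x̄) ≠ ∅. Then the difference rule for regular subgradients holds: ∂̂(φ₁ − φ₂)(x̄) ⊆ ⋂_{v ∈ ∂̂φ₂(x̄)} [∂̂φ₁(x̄) − v] ⊆ ∂̂φ₁(x̄) − ∂̂φ₂(x̄). -/
open Filter Topology RealInnerProductSpace

noncomputable section

variable {E Y : Type*}

section RegularSubdiff

variable [NormedAddCommGroup E] [InnerProductSpace ℝ E]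

theorem add_mem_regSubdiff_add {φ ψ : E → EReal} {x v w : E}
    (hφ_top : φ x ≠ ⊤) (hφ_bot : φ x ≠ ⊥) (hψ_top : ψ x ≠ ⊤) (hψ_bot : ψ x ≠ ⊥)
    (hv : v ∈ regSubdiff φ x) (hw : w ∈ regSubdiff ψ x) :
    v + w ∈ regSubdiff (fun u => φ u + ψ u) x := by
  intro ε hε
  obtain ⟨δ₁, hδ₁, hφ⟩ := hv (ε / 2) (half_pos hε)
  obtain ⟨δ₂, hδ₂, hψ⟩ := hw (ε / 2) (half_pos hε)
  refine ⟨min δ₁ δ₂, lt_min hδ₁ hδ₂, fun u hu => ?_⟩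
  have hsplit : (φ x + ψ x).toReal + ⟪v + w, u - x⟫ - ε * ‖u - x‖ =
      ((φ x).toReal + ⟪v, u - x⟫ - ε / 2 * ‖u - x‖) +
        ((ψ x).toReal + ⟪w, u - x⟫ - ε / 2 * ‖u - x‖) := by
    rw [EReal.toReal_add hφ_top hφ_bot hψ_top hψ_bot, inner_add_left]
    ring
  rw [hsplit, EReal.coe_add]
  exact add_le_add (hφ u (hu.trans_le (min_le_left _ _)))
    (hψ u (hu.trans_le (min_le_right _ _)))

theorem add_mem_regSubdiff_of_mem_regSubdiff_sub {φ : E → EReal} {ψ : E → ℝ} {x v w : E}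
    (htop : φ x ≠ ⊤) (hbot : φ x ≠ ⊥)
    (hw : w ∈ regSubdiff (fun u => φ u - ψ u) x) (hv : v ∈ regSubdiffR ψ x) :
    w + v ∈ regSubdiff φ x := by
  have hsub : φ x - ψ x = ((φ x).toReal - ψ x : ℝ) := by
    rw [EReal.coe_sub, EReal.coe_toReal htop hbot]
  have hsum := add_mem_regSubdiff_add (φ := fun u => φ u - ψ u)
    (hsub ▸ EReal.coe_ne_top _) (hsub ▸ EReal.coe_ne_bot _)
    (EReal.coe_ne_top (ψ x)) (EReal.coe_ne_bot (ψ x)) hw hv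
  simpa only [EReal.sub_add_cancel] using hsum

end RegularSubdiff

/-- Difference rule for regular subgradients:
`∂̂(φ₁ - φ₂)(x̄) ⊆ ⋂_{v ∈ ∂̂φ₂(x̄)} [∂̂φ₁(x̄) - v] ⊆ ∂̂φ₁(x̄) - ∂̂φ₂(x̄)`. -/
theorem regular_subdiff_difference_rule {n : ℕ}
    (φ₁ : EuclideanSpace ℝ (Fin n) → EReal) (φ₂ : EuclideanSpace ℝ (Fin n) → ℝ) (xbar : EuclideanSpace ℝ (Fin n))
    (htop : φ₁ xbar ≠ ⊤) (hbot : φ₁ xbar ≠ ⊥)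
    (hne : (regSubdiffR φ₂ xbar).Nonempty) :
    (∀ w ∈ regSubdiff (fun u => φ₁ u - ((φ₂ u : ℝ) : EReal)) xbar,
        ∀ v ∈ regSubdiffR φ₂ xbar, w + v ∈ regSubdiff φ₁ xbar) ∧
    (∀ w : EuclideanSpace ℝ (Fin n),
        (∀ v ∈ regSubdiffR φ₂ xbar, w + v ∈ regSubdiff φ₁ xbar) →
        ∃ a ∈ regSubdiff φ₁ xbar, ∃ b ∈ regSubdiffR φ₂ xbar, w = a - b) := by
  refine ⟨fun w hw v hv => add_mem_regSubdiff_of_mem_regSubdiff_sub htop hbot hw hv,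
    fun w hw => ?_⟩
  obtain ⟨v, hv⟩ := hne
  exact ⟨w + v, hw v hv, v, hv, (add_sub_cancel_right w v).symm⟩

end
end

section
/- Let φ₁ : ℝⁿ → ℝ∪{+∞} and φ₂ : ℝⁿ → ℝ be finite at x̄, and let x̄ be a local minimizer of the difference function φ₁ − φ₂. Then the necessary optimality condition ∂̂φ₂(x̄) ⊆ ∂̂φ₁(x̄) holds. -/
open Filter Topology RealInnerProductSpace

noncomputable section

variable {E Y : Type*}

/-! Near `x̄`, a local minimum of `φ₁ - φ₂` makes `φ₂ + (φ₁ x̄ - φ₂ x̄)` a minorant of `φ₁` that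
touches it at `x̄`. Regular subgradients are unchanged by adding a constant and pass from a
minorant to the function at a point of contact. -/

section RegularSubdifferential

variable [NormedAddCommGroup E] [Inner ℝ E]

theorem regSubdiff_subset_of_eventually_le {ψ φ : E → EReal} {x : E}
    (hle : ∀ᶠ u in 𝓝 x, ψ u ≤ φ u) (hx : (ψ x).toReal = (φ x).toReal) :
    regSubdiff ψ x ⊆ regSubdiff φ x := by
  intro v hv ε hε
  obtain ⟨δ₀, hδ₀, hle_ball⟩ := Metric.eventually_nhds_iff.1 hle
  obtain ⟨δ₁, hδ₁, hv_ball⟩ := hv ε hε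
  refine ⟨min δ₀ δ₁, lt_min hδ₀ hδ₁, fun u hu => ?_⟩
  rw [← hx]
  exact (hv_ball u (hu.trans_le (min_le_right _ _))).trans
    (hle_ball (by rw [dist_eq_norm]; exact hu.trans_le (min_le_left _ _)))

theorem regSubdiffR_subset_regSubdiffR_add_const (φ : E → ℝ) (x : E) (c : ℝ) :
    regSubdiffR φ x ⊆ regSubdiffR (fun u => φ u + c) x := by
  intro v hv ε hε
  obtain ⟨δ, hδ, hv_ball⟩ := hv ε hε
  refine ⟨δ, hδ, fun u hu => ?_⟩
  have hu' := hv_ball u hu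
  simp only [EReal.toReal_coe, EReal.coe_le_coe_iff] at hu' ⊢
  linarith

theorem EReal.add_coe_sub_le_of_sub_le_sub {a b : EReal} {p q : ℝ} (h : a - p ≤ b - q) :
    a + ((q - p : ℝ) : EReal) ≤ b :=
  calc a + ((q - p : ℝ) : EReal) = a - p + q := by
        induction a <;> simp [← EReal.coe_sub, ← EReal.coe_add]; ring
    _ ≤ b - q + q := by gcongr
    _ = b := EReal.sub_add_cancel

theorem regSubdiffR_subset_regSubdiff_of_isLocalMin_sub {φ₁ : E → EReal} {φ₂ : E → ℝ} {x : E}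
    (hbot : φ₁ x ≠ ⊥) (hmin : IsLocalMin (fun u => φ₁ u - φ₂ u) x) :
    regSubdiffR φ₂ x ⊆ regSubdiff φ₁ x := by
  set r := (φ₁ x).toReal with hr
  refine (regSubdiffR_subset_regSubdiffR_add_const φ₂ x (r - φ₂ x)).trans
    (regSubdiff_subset_of_eventually_le ?_ (by simp [hr]))
  filter_upwards [hmin] with u hu
  calc ((φ₂ u + (r - φ₂ x) : ℝ) : EReal) = r + ((φ₂ u - φ₂ x : ℝ) : EReal) := by
        rw [← EReal.coe_add]; ring_nf
    _ ≤ φ₁ x + ((φ₂ u - φ₂ x : ℝ) : EReal) := by gcongr; exact EReal.coe_toReal_le hbot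
    _ ≤ φ₁ u := EReal.add_coe_sub_le_of_sub_le_sub hu

end RegularSubdifferential

theorem difference_local_min_condition_general {n : ℕ}
    (φ₁ : EuclideanSpace ℝ (Fin n) → EReal) (φ₂ : EuclideanSpace ℝ (Fin n) → ℝ) (xbar : EuclideanSpace ℝ (Fin n))
    (hbot : φ₁ xbar ≠ ⊥)
    (hmin : ∃ U ∈ 𝓝 xbar, ∀ u ∈ U,
      φ₁ xbar - ((φ₂ xbar : ℝ) : EReal) ≤ φ₁ u - ((φ₂ u : ℝ) : EReal)) :
    regSubdiffR φ₂ xbar ⊆ regSubdiff φ₁ xbar :=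
  let ⟨_, hU, hU_min⟩ := hmin
  regSubdiffR_subset_regSubdiff_of_isLocalMin_sub hbot (Filter.mem_of_superset hU hU_min)

/-- Necessary condition for a local minimizer of a difference of functions:
`∂̂φ₂(x̄) ⊆ ∂̂φ₁(x̄)`. -/
theorem difference_local_min_condition {n : ℕ}
    (φ₁ : EuclideanSpace ℝ (Fin n) → EReal) (φ₂ : EuclideanSpace ℝ (Fin n) → ℝ) (xbar : EuclideanSpace ℝ (Fin n))
    (htop : φ₁ xbar ≠ ⊤) (hbot : φ₁ xbar ≠ ⊥)
    (hmin : ∃ U ∈ 𝓝 xbar, ∀ u ∈ U,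
      φ₁ xbar - ((φ₂ xbar : ℝ) : EReal) ≤ φ₁ u - ((φ₂ u : ℝ) : EReal)) :
    regSubdiffR φ₂ xbar ⊆ regSubdiff φ₁ xbar :=
  difference_local_min_condition_general φ₁ φ₂ xbar hbot hmin

end
end
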